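/- arXiv:1901.02670 — 8 statements merged into one kernel-verified Lean document; each statement's English description precedes it below -/
import Mathlib

section
/- Let b > 1/2, α ∈ (−π, π], and let f be analytic on the open unit disc Δ with f(0) = 0, f'(0) = 1, satisfying |f'(z) + ((1+e^{iα})/2)·z·f''(z) − b| < b for all z ∈ Δ. Then 0 < Re(f'(z)) < 2b for all z ∈ Δ. -/
open Complex Metric Real

open Filter Topology Set

/-! Write `q = p + c z p'` with `Re c ≥ 0`. Along the logarithmic spiral `w(s) = z e^{-cs}`, which
stays in the disc `|u| ≤ |z|`, one has `(p ∘ w)' = p ∘ w - q ∘ w`, hence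
`p z = e^{-T} p (w T) + ∫₀ᵀ e^{-s} q (w s) ds`, a convex combination. The values of `p` on that
compact disc are bounded, and those of `q` stay in a compact subset of the open disc `D(a, R)`
if `q` maps into `D(a, R)`; letting `T → ∞` puts `p z` in `D(a, R)` as well. For `p = f'`,
`c = (1 + e^{iα})/2` and `D(b, b) ⊆ {0 < Re w < 2b}` this is the theorem. -/

noncomputable def logSpiral (c z : ℂ) (s : ℝ) : ℂ := z * exp (-c * s)

lemma logSpiral_zero (c z : ℂ) : logSpiral c z 0 = z := by simp [logSpiral]

lemma norm_logSpiral (c z : ℂ) (s : ℝ) :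
    ‖logSpiral c z s‖ = ‖z‖ * Real.exp (-(c.re * s)) := by
  simp [logSpiral, norm_exp]

lemma norm_logSpiral_le {c : ℂ} (hc : 0 ≤ c.re) (z : ℂ) {s : ℝ} (hs : 0 ≤ s) :
    ‖logSpiral c z s‖ ≤ ‖z‖ := by
  rw [norm_logSpiral]
  exact mul_le_of_le_one_right (norm_nonneg z)
    (Real.exp_le_one_iff.2 (neg_nonpos.2 (mul_nonneg hc hs)))

lemma hasDerivAt_logSpiral (c z : ℂ) (s : ℝ) :
    HasDerivAt (logSpiral c z) (-c * logSpiral c z s) s := by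
  refine ((((hasDerivAt_id (s : ℂ)).const_mul (-c)).cexp.const_mul z).comp_ofReal).congr_deriv ?_
  simp only [logSpiral, id_eq, mul_one]
  ring

lemma continuous_logSpiral (c z : ℂ) : Continuous (logSpiral c z) := by
  unfold logSpiral
  fun_prop

noncomputable def eulerOp (c : ℂ) (p : ℂ → ℂ) (z : ℂ) : ℂ := p z + c * z * deriv p z

lemma hasDerivAt_comp_logSpiral {p : ℂ → ℂ} {c z : ℂ} {s : ℝ}
    (hp : DifferentiableAt ℂ p (logSpiral c z s)) :
    HasDerivAt (fun t ↦ p (logSpiral c z t))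
      (p (logSpiral c z s) - eulerOp c p (logSpiral c z s)) s := by
  refine (hp.hasDerivAt.comp s (hasDerivAt_logSpiral c z s)).congr_deriv ?_
  simp only [eulerOp]
  ring

section

variable {p : ℂ → ℂ} {c a z : ℂ} {r : ℝ}

lemma continuousOn_eulerOp {U : Set ℂ} (hU : IsOpen U) (hp : DifferentiableOn ℂ p U) :
    ContinuousOn (eulerOp c p) U :=
  hp.continuousOn.add ((continuousOn_const.mul continuousOn_id).mul (hp.deriv hU).continuousOn)

lemma logSpiral_mem_ball (hc : 0 ≤ c.re) (hz : z ∈ ball (0 : ℂ) r) {s : ℝ} (hs : 0 ≤ s) :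
    logSpiral c z s ∈ ball (0 : ℂ) r :=
  mem_ball_zero_iff.2 ((norm_logSpiral_le hc z hs).trans_lt (mem_ball_zero_iff.1 hz))

lemma sub_eq_exp_smul_add_integral (hc : 0 ≤ c.re) (hp : DifferentiableOn ℂ p (ball 0 r))
    (hz : z ∈ ball (0 : ℂ) r) {T : ℝ} (hT : 0 ≤ T) :
    p z - a = Real.exp (-T) • (p (logSpiral c z T) - a) +
      ∫ s in 0..T, Real.exp (-s) • (eulerOp c p (logSpiral c z s) - a) := by
  have hderiv : ∀ s ∈ uIcc 0 T, HasDerivAt (fun t ↦ Real.exp (-t) • (p (logSpiral c z t) - a))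
      (-(Real.exp (-s) • (eulerOp c p (logSpiral c z s) - a))) s := by
    intro s hs
    rw [uIcc_of_le hT] at hs
    have hw := logSpiral_mem_ball hc hz hs.1
    refine ((hasDerivAt_neg s).exp.smul ((hasDerivAt_comp_logSpiral
      (hp.differentiableAt (isOpen_ball.mem_nhds hw))).sub_const a)).congr_deriv ?_
    simp only [smul_sub, neg_smul, mul_neg_one]
    abel
  have hint : IntervalIntegrable (fun s ↦ -(Real.exp (-s) • (eulerOp c p (logSpiral c z s) - a)))
      MeasureTheory.volume 0 T := by
    refine ContinuousOn.intervalIntegrable (ContinuousOn.neg ?_)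
    refine (Real.continuous_exp.comp continuous_neg).continuousOn.smul (ContinuousOn.sub ?_
      continuousOn_const)
    refine (continuousOn_eulerOp isOpen_ball hp).comp (continuous_logSpiral c z).continuousOn ?_
    intro s hs
    rw [uIcc_of_le hT] at hs
    exact logSpiral_mem_ball hc hz hs.1
  have hftc := intervalIntegral.integral_eq_sub_of_hasDerivAt hderiv hint
  rw [intervalIntegral.integral_neg, logSpiral_zero] at hftc
  simp only [neg_zero, Real.exp_zero, one_smul] at hftc
  linear_combination hftc

lemma integral_exp_neg (T : ℝ) : ∫ s in 0..T, Real.exp (-s) = 1 - Real.exp (-T) := by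
  rw [intervalIntegral.integral_comp_neg (fun s ↦ Real.exp s), integral_exp, neg_zero,
    Real.exp_zero]

lemma norm_sub_le_of_norm_eulerOp_sub_le (hc : 0 ≤ c.re) (hp : DifferentiableOn ℂ p (ball 0 r))
    (hz : z ∈ ball (0 : ℂ) r) {T C M : ℝ} (hT : 0 ≤ T) (hC : ‖p (logSpiral c z T) - a‖ ≤ C)
    (hM : ∀ s ∈ Icc 0 T, ‖eulerOp c p (logSpiral c z s) - a‖ ≤ M) :
    ‖p z - a‖ ≤ Real.exp (-T) * C + (1 - Real.exp (-T)) * M := by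
  have hintegral : ‖∫ s in 0..T, Real.exp (-s) • (eulerOp c p (logSpiral c z s) - a)‖ ≤
      (1 - Real.exp (-T)) * M := by
    rw [← integral_exp_neg, ← intervalIntegral.integral_mul_const]
    refine intervalIntegral.norm_integral_le_of_norm_le hT (.of_forall fun s hs ↦ ?_)
      (Continuous.intervalIntegrable (by fun_prop) _ _)
    rw [norm_smul, Real.norm_of_nonneg (Real.exp_pos _).le]
    exact mul_le_mul_of_nonneg_left (hM s (Ioc_subset_Icc_self hs)) (Real.exp_pos _).le
  calc ‖p z - a‖
      ≤ ‖Real.exp (-T) • (p (logSpiral c z T) - a)‖ +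
          ‖∫ s in 0..T, Real.exp (-s) • (eulerOp c p (logSpiral c z s) - a)‖ := by
        rw [sub_eq_exp_smul_add_integral hc hp hz hT]
        exact norm_add_le _ _
    _ ≤ Real.exp (-T) * C + (1 - Real.exp (-T)) * M := by
        rw [norm_smul, Real.norm_of_nonneg (Real.exp_pos _).le]
        gcongr

theorem mapsTo_ball_of_mapsTo_eulerOp {R : ℝ} (hc : 0 ≤ c.re)
    (hp : DifferentiableOn ℂ p (ball 0 r)) (h : MapsTo (eulerOp c p) (ball 0 r) (ball a R)) :
    MapsTo p (ball 0 r) (ball a R) := by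
  intro z hz
  set K := closedBall (0 : ℂ) ‖z‖
  have hKc : IsCompact K := isCompact_closedBall 0 ‖z‖
  have hK : K ⊆ ball 0 r := closedBall_subset_ball (mem_ball_zero_iff.1 hz)
  have hspiral : ∀ s, 0 ≤ s → logSpiral c z s ∈ K := fun s hs ↦
    mem_closedBall_zero_iff.2 (norm_logSpiral_le hc z hs)
  obtain ⟨C, hC⟩ := hKc.exists_bound_of_continuousOn
    ((hp.continuousOn.mono hK).sub continuousOn_const)
  obtain ⟨u, huK, hu⟩ := hKc.exists_isMaxOn
    ⟨z, mem_closedBall_zero_iff.2 le_rfl⟩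
    (((continuousOn_eulerOp isOpen_ball hp).mono hK).sub continuousOn_const).norm
  have hMR : ‖eulerOp c p u - a‖ < R := mem_ball_iff_norm.1 (h (hK huK))
  have hbound : ∀ T, 0 ≤ T →
      ‖p z - a‖ ≤ Real.exp (-T) * C + (1 - Real.exp (-T)) * ‖eulerOp c p u - a‖ :=
    fun T hT ↦ norm_sub_le_of_norm_eulerOp_sub_le hc hp hz hT (hC _ (hspiral T hT))
      fun s hs ↦ hu (hspiral s hs.1)
  have hlim : Tendsto (fun T ↦ Real.exp (-T) * C + (1 - Real.exp (-T)) * ‖eulerOp c p u - a‖)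
      atTop (𝓝 ‖eulerOp c p u - a‖) := by
    simpa using (Real.tendsto_exp_neg_atTop_nhds_zero.mul_const C).add
      (((tendsto_const_nhds (x := (1 : ℝ))).sub Real.tendsto_exp_neg_atTop_nhds_zero).mul_const
        ‖eulerOp c p u - a‖)
  exact mem_ball_iff_norm.2
    ((ge_of_tendsto hlim (eventually_atTop.2 ⟨0, hbound⟩)).trans_lt hMR)

end

lemma re_one_add_exp_mul_I_div_two_nonneg (α : ℝ) : 0 ≤ ((1 + exp (α * I)) / 2).re := by
  have : ((1 + exp (α * I)) / 2).re = (1 + Real.cos α) / 2 := by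
    simp [exp_ofReal_mul_I_re]
  rw [this]
  linarith [Real.neg_one_le_cos α]

theorem L_alpha_b_deriv_re_general (b α : ℝ)
    (f : ℂ → ℂ) (hf : DifferentiableOn ℂ f (Metric.ball (0 : ℂ) 1))
    (hcond : ∀ z ∈ Metric.ball (0 : ℂ) 1,
      ‖(deriv f z + ((1 + Complex.exp (α * Complex.I)) / 2) * z * deriv (deriv f) z
        - (b : ℂ))‖ < b) :
    ∀ z ∈ Metric.ball (0 : ℂ) 1, 0 < (deriv f z).re ∧ (deriv f z).re < 2 * b := by
  have hmaps : MapsTo (deriv f) (ball 0 1) (ball (b : ℂ) b) :=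
    mapsTo_ball_of_mapsTo_eulerOp (re_one_add_exp_mul_I_div_two_nonneg α) (hf.deriv isOpen_ball)
      fun z hz ↦ mem_ball_iff_norm.2 (hcond z hz)
  intro z hz
  have h := (abs_re_le_norm (deriv f z - b)).trans_lt (mem_ball_iff_norm.1 (hmaps hz))
  rw [sub_re, ofReal_re, abs_lt] at h
  constructor <;> linarith

theorem L_alpha_b_deriv_re (b α : ℝ) (hb : 1 / 2 < b) (hα : -π < α ∧ α ≤ π)
    (f : ℂ → ℂ) (hf : DifferentiableOn ℂ f (Metric.ball (0 : ℂ) 1))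
    (hf0 : f 0 = 0) (hf1 : deriv f 0 = 1)
    (hcond : ∀ z ∈ Metric.ball (0 : ℂ) 1,
      ‖(deriv f z + ((1 + Complex.exp (α * Complex.I)) / 2) * z * deriv (deriv f) z
        - (b : ℂ))‖ < b) :
    ∀ z ∈ Metric.ball (0 : ℂ) 1, 0 < (deriv f z).re ∧ (deriv f z).re < 2 * b :=
  L_alpha_b_deriv_re_general b α f hf hcond
end

section
/- Let 0 ≤ β < 1, α ∈ (−π, π], and let f be analytic on the open unit disc Δ with f(0) = 0, f'(0) = 1, satisfying Re(f'(z) + ((1+e^{iα})/2)·z·f''(z)) > β for all z ∈ Δ. Then Re(f'(z)) > β for all z ∈ Δ. -/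
open Complex Metric Real

/-!
Write `p = f'` and `c = (1 + e^{iα})/2`, so that `Re c = (1 + cos α)/2 ≥ 0`. If `Re p ≤ β` somewhere,
take a closed disc `|z| ≤ r < 1` containing that point. By the maximum modulus principle for
`exp (-p)`, the minimum of `Re p` over the disc is attained at some `z₀` with `|z₀| = r`, and there
`z₀ p'(z₀)` is a nonpositive real number: its imaginary part is (minus) the derivative of `Re p`
along the circle, its real part the radial derivative. Hence
`Re (p(z₀) + c z₀ p'(z₀)) = Re p(z₀) + Re c · z₀ p'(z₀) ≤ Re p(z₀) ≤ β`, contradicting the hypothesis.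
-/

open scoped ComplexOrder

theorem exists_mem_sphere_isMinOn_re_of_diffContOnCl {p : ℂ → ℂ} {r : ℝ} (hr : 0 < r)
    (hp : DiffContOnCl ℂ p (ball 0 r)) :
    ∃ z ∈ sphere (0 : ℂ) r, IsMinOn (fun z ↦ (p z).re) (closedBall 0 r) z := by
  have hexp : DiffContOnCl ℂ (fun z ↦ exp (-p z)) (ball 0 r) :=
    ⟨hp.differentiableOn.neg.cexp, hp.continuousOn.neg.cexp⟩
  obtain ⟨z, hz, hmax⟩ := exists_mem_frontier_isMaxOn_norm isBounded_ball (nonempty_ball.2 hr) hexp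
  rw [frontier_ball 0 hr.ne'] at hz
  rw [closure_ball 0 hr.ne'] at hmax
  refine ⟨z, hz, fun w hw ↦ ?_⟩
  simpa [Complex.norm_exp] using hmax hw

theorem mul_deriv_nonpos_of_isMinOn_re_closedBall {p : ℂ → ℂ} {z₀ : ℂ}
    (hp : DifferentiableAt ℂ p z₀)
    (hmin : IsMinOn (fun z ↦ (p z).re) (closedBall 0 ‖z₀‖) z₀) :
    z₀ * deriv p z₀ ≤ 0 := by
  set D : ℂ →L[ℝ] ℝ := reCLM.comp ((fderiv ℂ p z₀).restrictScalars ℝ)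
  have hD : HasFDerivAt (fun z ↦ (p z).re) D z₀ :=
    reCLM.hasFDerivAt.comp z₀ (hp.hasFDerivAt.restrictScalars ℝ)
  have hD_apply (y : ℂ) : D y = (y * deriv p z₀).re := by simp [D]
  rw [Complex.nonpos_iff]
  constructor
  · have hradial : -z₀ ∈ posTangentConeAt (closedBall 0 ‖z₀‖) z₀ := by
      refine mem_posTangentConeAt_of_segment_subset ?_
      rw [add_neg_cancel]
      exact (convex_closedBall 0 ‖z₀‖).segment_subset (by simp) (by simp)
    have := hmin.localize.hasFDerivWithinAt_nonneg hD.hasFDerivWithinAt hradial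
    rw [hD_apply] at this
    simpa using this
  · set γ : ℝ → ℂ := fun t ↦ z₀ * exp (t * I)
    have hγ : HasDerivAt γ (z₀ * I) 0 := by
      simpa using ((hasDerivAt_id (0 : ℝ)).ofReal_comp.mul_const I).cexp.const_mul z₀
    have hmin_circle : IsLocalMin (fun t ↦ (p (γ t)).re) 0 :=
      Filter.Eventually.of_forall fun t ↦ by
        simpa [γ] using hmin (a := γ t) (by simp [γ, norm_exp_ofReal_mul_I])
    have := hmin_circle.hasDerivAt_eq_zero (hD.comp_hasDerivAt_of_eq 0 hγ (by simp [γ]))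
    rwa [hD_apply, mul_right_comm, mul_I_re, neg_eq_zero] at this

theorem lt_re_of_lt_re_add_mul_deriv {p : ℂ → ℂ} {c : ℂ} {β R : ℝ} (hc : 0 ≤ c.re)
    (hp : DifferentiableOn ℂ p (ball 0 R))
    (h : ∀ z ∈ ball (0 : ℂ) R, β < (p z + c * z * deriv p z).re) :
    ∀ z ∈ ball (0 : ℂ) R, β < (p z).re := by
  intro z₁ hz₁
  by_contra! hle
  rw [mem_ball_zero_iff] at hz₁
  obtain ⟨r, hz₁r, hrR⟩ := exists_between hz₁
  have hr : 0 < r := (norm_nonneg z₁).trans_lt hz₁r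
  have hsub : closedBall (0 : ℂ) r ⊆ ball 0 R := closedBall_subset_ball hrR
  obtain ⟨z₀, hz₀, hmin⟩ :=
    exists_mem_sphere_isMinOn_re_of_diffContOnCl hr (hp.diffContOnCl_ball hsub)
  rw [mem_sphere_zero_iff_norm] at hz₀
  have hz₀R : z₀ ∈ ball (0 : ℂ) R := hsub (sphere_subset_closedBall (by simpa using hz₀))
  have hw := mul_deriv_nonpos_of_isMinOn_re_closedBall
    (hp.differentiableAt (isOpen_ball.mem_nhds hz₀R)) (hz₀ ▸ hmin)
  rw [Complex.nonpos_iff] at hw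
  have hmin_le : (p z₀).re ≤ β := (hmin (mem_closedBall_zero_iff.2 hz₁r.le)).trans hle
  have hcw : (c * z₀ * deriv p z₀).re ≤ 0 := by
    rw [mul_assoc, mul_re, hw.2, mul_zero, sub_zero]
    exact mul_nonpos_of_nonneg_of_nonpos hc hw.1
  have := h z₀ hz₀R
  rw [add_re] at this
  linarith

theorem R_alpha_beta_deriv_re_general (β α : ℝ)
    (f : ℂ → ℂ) (hf : DifferentiableOn ℂ f (Metric.ball (0 : ℂ) 1))
    (hcond : ∀ z ∈ Metric.ball (0 : ℂ) 1,
      β < (deriv f z + ((1 + Complex.exp (α * Complex.I)) / 2) * z * deriv (deriv f) z).re) :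
    ∀ z ∈ Metric.ball (0 : ℂ) 1, β < (deriv f z).re := by
  have hc : 0 ≤ ((1 + Complex.exp (α * Complex.I)) / 2).re := by
    rw [div_ofNat_re, add_re, one_re, exp_ofReal_mul_I_re]
    linarith [neg_one_le_cos α]
  exact lt_re_of_lt_re_add_mul_deriv hc
    ((hf.analyticOnNhd isOpen_ball).deriv.differentiableOn) hcond

theorem R_alpha_beta_deriv_re (β α : ℝ) (hβ : 0 ≤ β ∧ β < 1) (hα : -π < α ∧ α ≤ π)
    (f : ℂ → ℂ) (hf : DifferentiableOn ℂ f (Metric.ball (0 : ℂ) 1))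
    (hf0 : f 0 = 0) (hf1 : deriv f 0 = 1)
    (hcond : ∀ z ∈ Metric.ball (0 : ℂ) 1,
      β < (deriv f z + ((1 + Complex.exp (α * Complex.I)) / 2) * z * deriv (deriv f) z).re) :
    ∀ z ∈ Metric.ball (0 : ℂ) 1, β < (deriv f z).re :=
  R_alpha_beta_deriv_re_general β α f hf hcond
end

section
/- Let 0 ≤ β < 1, α ∈ (−π, π], and let f be analytic on the open unit disc Δ with f(0) = 0, f'(0) = 1, satisfying Re(f'(z) + ((1+e^{iα})/2)·z·f''(z)) > β for all z ∈ Δ. Then Re(f(z)/z) > β for all z ∈ Δ \ {0}. -/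
/-!
Write `f z = z * p z` with `p` holomorphic and `p 0 = 1`, and put `λ = (1 + e^{iα}) / 2`, so that
`0 ≤ Re λ`. The hypothesis says `β < Re G'` for `G = λ z f' + (1 - λ) f`, and the mean value
theorem along `[0, z]` turns this into `β < Re (G z / z) = Re (p z + λ z p' z)`.
If `Re p ≤ β` somewhere, let `a` be such a point of least modulus. Then `Re p` is minimal at `a`
on the closed disc of radius `‖a‖`, which forces `a p' a` to be real and nonpositive
(Jack's lemma); hence `Re (p a + λ a p' a) ≤ Re (p a) ≤ β`, a contradiction.
-/

open Complex Metric Real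

open scoped ComplexOrder ComplexConjugate

theorem exists_isMinOn_closedBall_of_le {E : Type*} [NormedAddCommGroup E] [NormedSpace ℝ E]
    [ProperSpace E] {u : E → ℝ} {β : ℝ} {x : E} (hu : ContinuousOn u (closedBall 0 ‖x‖))
    (hx : u x ≤ β) : ∃ a ∈ closedBall (0 : E) ‖x‖, u a ≤ β ∧ IsMinOn u (closedBall 0 ‖a‖) a := by
  set S := {z ∈ closedBall (0 : E) ‖x‖ | u z ≤ β}
  have hS : IsCompact S :=
    (isCompact_closedBall 0 ‖x‖).of_isClosed_subset
      (isClosed_closedBall.isClosed_le hu continuousOn_const) (Set.sep_subset _ _)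
  obtain ⟨a, ⟨ha, hua⟩, hmin⟩ := hS.exists_isMinOn ⟨x, by simp, hx⟩ continuous_norm.continuousOn
  refine ⟨a, ha, hua, ?_⟩
  rcases eq_or_ne ‖a‖ 0 with ha0 | ha0
  · obtain rfl := norm_eq_zero.mp ha0
    simp [isMinOn_iff]
  have hsub : closedBall (0 : E) ‖a‖ ⊆ closedBall 0 ‖x‖ :=
    closedBall_subset_closedBall (by simpa using ha)
  have hball : ∀ z ∈ ball (0 : E) ‖a‖, β ≤ u z := fun z hz ↦ by
    by_contra! hlt
    have : ‖a‖ ≤ ‖z‖ := hmin ⟨hsub (ball_subset_closedBall hz), hlt.le⟩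
    exact (mem_ball_zero_iff.mp hz).not_ge this
  rw [← closure_ball 0 ha0] at hsub ⊢
  exact fun w hw ↦ hua.trans (le_on_closure hball continuousOn_const (hu.mono hsub) hw)

theorem IsMinOn.re_deriv_mul_sub_nonneg {p : ℂ → ℂ} {s : Set ℂ} {a d y : ℂ}
    (hmin : IsMinOn (fun z ↦ (p z).re) s a) (hp : HasDerivAt p d a) (hs : Convex ℝ s)
    (ha : a ∈ s) (hy : y ∈ s) : 0 ≤ (d * (y - a)).re := by
  have hre : HasFDerivAt (fun z ↦ (p z).re)
      (reCLM.comp ((ContinuousLinearMap.smulRight (1 : ℂ →L[ℂ] ℂ) d).restrictScalars ℝ)) a :=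
    reCLM.hasFDerivAt.comp a (hp.hasFDerivAt.restrictScalars ℝ)
  have := hmin.localize.hasFDerivWithinAt_nonneg hre.hasFDerivWithinAt
    (sub_mem_posTangentConeAt_of_segment_subset (hs.segment_subset ha hy))
  simpa [mul_comm] using this

theorem IsMinOn.mul_deriv_nonpos_of_closedBall {p : ℂ → ℂ} {a d : ℂ}
    (hmin : IsMinOn (fun z ↦ (p z).re) (closedBall 0 ‖a‖) a) (hp : HasDerivAt p d a) :
    a * d ≤ 0 := by
  rcases eq_or_ne d 0 with rfl | hd
  · simp
  have hd' : ‖d‖ ≠ 0 := norm_ne_zero_iff.mpr hd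
  -- `y` minimises `Re (d * y)` over the disc
  set y : ℂ := -((‖a‖ / ‖d‖ : ℝ) * conj d)
  have hy : y ∈ closedBall 0 ‖a‖ := by simp [y, hd']
  have hdy : (d * y).re = -‖a * d‖ := by
    simp only [y, norm_mul]
    rw [mul_neg, mul_left_comm, mul_conj, ← ofReal_mul, neg_re, ofReal_re, normSq_eq_norm_sq]
    field_simp
  have := hmin.re_deriv_mul_sub_nonneg hp (convex_closedBall 0 ‖a‖) (by simp) hy
  rw [mul_sub, sub_re, hdy, mul_comm d a] at this
  exact re_eq_neg_norm.mp (le_antisymm (by linarith) (abs_le.mp (abs_re_le_norm _)).1)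

theorem re_gt_of_re_add_mul_deriv_gt {p : ℂ → ℂ} {l : ℂ} {β R : ℝ}
    (hp : DifferentiableOn ℂ p (ball 0 R)) (hl : 0 ≤ l.re) (hp0 : β < (p 0).re)
    (h : ∀ z ∈ ball (0 : ℂ) R, z ≠ 0 → β < (p z + l * (z * deriv p z)).re) :
    ∀ z ∈ ball (0 : ℂ) R, β < (p z).re := by
  intro z hz
  by_contra! hpz
  have hsub : closedBall (0 : ℂ) ‖z‖ ⊆ ball 0 R := closedBall_subset_ball (mem_ball_zero_iff.mp hz)
  obtain ⟨a, ha, hpa, hmin⟩ := exists_isMinOn_closedBall_of_le (u := fun z ↦ (p z).re)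
    (continuous_re.comp_continuousOn (hp.continuousOn.mono hsub)) hpz
  have ha0 : a ≠ 0 := by rintro rfl; linarith
  have hda : a * deriv p a ≤ 0 := hmin.mul_deriv_nonpos_of_closedBall
    (hp.differentiableAt (isOpen_ball.mem_nhds (hsub ha))).hasDerivAt
  obtain ⟨hre, him⟩ := Complex.le_def.mp hda
  have hterm : (l * (a * deriv p a)).re ≤ 0 := by
    rw [mul_re, him, zero_im, mul_zero, sub_zero]
    exact mul_nonpos_of_nonneg_of_nonpos hl hre
  have := h a (hsub ha) ha0
  rw [add_re] at this
  linarith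

theorem re_div_gt_of_re_deriv_gt {G g : ℂ → ℂ} {β R : ℝ} (hG0 : G 0 = 0)
    (hG : ∀ z ∈ ball (0 : ℂ) R, HasDerivAt G (g z) z) (hg : ∀ z ∈ ball (0 : ℂ) R, β < (g z).re)
    {z : ℂ} (hz : z ∈ ball (0 : ℂ) R) (hz0 : z ≠ 0) : β < (G z / z).re := by
  have hseg : ∀ t ∈ Set.Icc (0 : ℝ) 1, (t : ℂ) * z ∈ ball (0 : ℂ) R := fun t ht ↦ by
    simpa using (convex_ball (0 : ℂ) R).smul_mem_of_zero_mem
      (mem_ball_self (pos_of_mem_ball hz)) hz ht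
  have hφ : ∀ t ∈ Set.Icc (0 : ℝ) 1,
      HasDerivAt (fun t : ℝ ↦ (G (t * z) / z).re) (g (t * z)).re t := fun t ht ↦ by
    have hGz := ((hG _ (hseg t ht)).comp (t : ℂ) (hasDerivAt_mul_const z)).div_const z
    rw [mul_div_cancel_right₀ _ hz0] at hGz
    exact reCLM.hasFDerivAt.comp_hasDerivAt t hGz.comp_ofReal
  obtain ⟨c, hc, hslope⟩ := exists_hasDerivAt_eq_slope (fun t : ℝ ↦ (G (t * z) / z).re)
    (fun t ↦ (g (t * z)).re) zero_lt_one
    (fun t ht ↦ (hφ t ht).continuousAt.continuousWithinAt)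
    (fun t ht ↦ hφ t (Set.Ioo_subset_Icc_self ht))
  have := hg _ (hseg c (Set.Ioo_subset_Icc_self hc))
  rw [hslope] at this
  simpa [hG0] using this

theorem eq_mul_dslope {f : ℂ → ℂ} (hf0 : f 0 = 0) : f = fun z ↦ z * dslope f 0 z := by
  funext z
  simpa [hf0] using (sub_smul_dslope f 0 z).symm

theorem div_eq_dslope_add_mul_deriv_dslope {f : ℂ → ℂ} (hf0 : f 0 = 0) (l : ℂ) {z : ℂ}
    (hz0 : z ≠ 0) (hp : DifferentiableAt ℂ (dslope f 0) z) :
    (l * z * deriv f z + (1 - l) * f z) / z =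
      dslope f 0 z + l * (z * deriv (dslope f 0) z) := by
  have hf' : HasDerivAt f (dslope f 0 z + z * deriv (dslope f 0) z) z := by
    have := (hasDerivAt_id' z).fun_mul hp.hasDerivAt
    rwa [← eq_mul_dslope hf0, one_mul] at this
  rw [hf'.deriv, congrFun (eq_mul_dslope hf0) z]
  field_simp
  ring

theorem hasDerivAt_mul_deriv_add_mul {f : ℂ → ℂ} {U : Set ℂ} (hf : DifferentiableOn ℂ f U)
    (hU : IsOpen U) (l : ℂ) {z : ℂ} (hz : z ∈ U) :
    HasDerivAt (fun w ↦ l * w * deriv f w + (1 - l) * f w)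
      (deriv f z + l * z * deriv (deriv f) z) z := by
  have hf' := (hf.differentiableAt (hU.mem_nhds hz)).hasDerivAt
  have hf'' := ((hf.analyticOnNhd hU).deriv.differentiableOn.differentiableAt
    (hU.mem_nhds hz)).hasDerivAt
  exact (((hasDerivAt_id' z).const_mul l).mul hf'').add (hf'.const_mul (1 - l))
    |>.congr_deriv (by ring)

theorem R_alpha_beta_f_div_z_re_general (β α : ℝ) (hβ : 0 ≤ β ∧ β < 1)
    (f : ℂ → ℂ) (hf : DifferentiableOn ℂ f (Metric.ball (0 : ℂ) 1))
    (hf0 : f 0 = 0) (hf1 : deriv f 0 = 1)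
    (hcond : ∀ z ∈ Metric.ball (0 : ℂ) 1,
      β < (deriv f z + ((1 + Complex.exp (α * Complex.I)) / 2) * z * deriv (deriv f) z).re) :
    ∀ z ∈ Metric.ball (0 : ℂ) 1, z ≠ 0 → β < (f z / z).re := by
  set l : ℂ := (1 + exp (α * I)) / 2
  have hl : 0 ≤ l.re := by
    simp only [l, div_ofNat_re, add_re, one_re, exp_ofReal_mul_I_re]
    linarith [neg_one_le_cos α]
  have hp : DifferentiableOn ℂ (dslope f 0) (ball 0 1) :=
    (differentiableOn_dslope (ball_mem_nhds 0 one_pos)).mpr hf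
  have hp_re : ∀ z ∈ ball (0 : ℂ) 1, β < (dslope f 0 z).re := by
    refine re_gt_of_re_add_mul_deriv_gt hp hl (by simpa [hf1] using hβ.2) fun z hz hz0 ↦ ?_
    rw [← div_eq_dslope_add_mul_deriv_dslope hf0 l hz0 (hp.differentiableAt
      (isOpen_ball.mem_nhds hz))]
    exact re_div_gt_of_re_deriv_gt (by simp [hf0])
      (fun w hw ↦ hasDerivAt_mul_deriv_add_mul hf isOpen_ball l hw) hcond hz hz0
  intro z hz hz0
  rw [congrFun (eq_mul_dslope hf0) z, mul_div_cancel_left₀ _ hz0]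
  exact hp_re z hz

theorem R_alpha_beta_f_div_z_re (β α : ℝ) (hβ : 0 ≤ β ∧ β < 1) (hα : -π < α ∧ α ≤ π)
    (f : ℂ → ℂ) (hf : DifferentiableOn ℂ f (Metric.ball (0 : ℂ) 1))
    (hf0 : f 0 = 0) (hf1 : deriv f 0 = 1)
    (hcond : ∀ z ∈ Metric.ball (0 : ℂ) 1,
      β < (deriv f z + ((1 + Complex.exp (α * Complex.I)) / 2) * z * deriv (deriv f) z).re) :
    ∀ z ∈ Metric.ball (0 : ℂ) 1, z ≠ 0 → β < (f z / z).re :=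
  R_alpha_beta_f_div_z_re_general β α hβ f hf hf0 hf1 hcond
end

section
/- Let α ∈ (−π, π] and let f be analytic on the open unit disc Δ with f(0) = 0, f'(0) = 1, satisfying Re(f'(z) + ((1+e^{iα})/2)·z·f''(z)) > 0 for all z ∈ Δ. Then f is univalent (injective) on Δ. -/
/-! With `p = f'` and `c = (1 + e^{iα})/2`, the hypothesis reads `Re (p z + c z p'(z)) > 0`,
and `Re c = (1 + cos α)/2 ≥ 0`. If `Re p` vanished somewhere in the disc, take a zero `w` of
`Re p` of least modulus. Then `Re p ≥ 0` on `|z| ≤ |w|` with minimum at `w`, so the radial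
derivative gives `Re (w p'(w)) ≤ 0` and the tangential one `Im (w p'(w)) = 0`; hence
`Re (p w + c w p'(w)) = Re c · Re (w p'(w)) ≤ 0`, a contradiction. So `Re f' > 0` on the convex
disc, and `f` is injective (Noshiro–Warschawski): for `z ≠ w`, the function
`t ↦ Re (f (z + t (w - z)) / (w - z))` has derivative `Re f'` and is strictly increasing on
`[0, 1]`. -/

open Complex Metric Real

theorem exists_zero_isMinOn_closedBall {E : Type*} [NormedAddCommGroup E] [NormedSpace ℝ E]
    [ProperSpace E] {u : E → ℝ} {R : ℝ} (hu : ContinuousOn u (ball 0 R)) (hu0 : 0 < u 0)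
    {z : E} (hz : z ∈ ball 0 R) (huz : u z ≤ 0) :
    ∃ w ∈ ball (0 : E) R, u w = 0 ∧ IsMinOn u (closedBall 0 ‖w‖) w := by
  have hzR : closedBall (0 : E) ‖z‖ ⊆ ball 0 R := closedBall_subset_ball (by simpa using hz)
  set K := closedBall (0 : E) ‖z‖ ∩ u ⁻¹' Set.Iic 0
  have hK : IsCompact K := (isCompact_closedBall 0 ‖z‖).of_isClosed_subset
    ((hu.mono hzR).preimage_isClosed_of_isClosed isClosed_closedBall isClosed_Iic)
    Set.inter_subset_left
  obtain ⟨w, ⟨hwz, huw⟩, hw_min⟩ :=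
    hK.exists_isMinOn ⟨z, by simp, huz⟩ continuous_norm.continuousOn
  have hwz' : ‖w‖ ≤ ‖z‖ := by simpa using hwz
  have hw_ball : closedBall (0 : E) ‖w‖ ⊆ ball 0 R :=
    (closedBall_subset_closedBall hwz').trans hzR
  have hw0 : ‖w‖ ≠ 0 := norm_ne_zero_iff.2 (by rintro rfl; exact hu0.not_ge huw)
  have hpos : ∀ y ∈ ball (0 : E) ‖w‖, 0 < u y := by
    intro y hy
    by_contra! huy
    have hyw : ‖y‖ < ‖w‖ := by simpa using hy
    exact hyw.not_ge (hw_min ⟨mem_closedBall_zero_iff.2 (hyw.le.trans hwz'), huy⟩)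
  have hnonneg : closedBall (0 : E) ‖w‖ ⊆ u ⁻¹' Set.Ici 0 := by
    have hclosed := (hu.mono hw_ball).preimage_isClosed_of_isClosed isClosed_closedBall
      (isClosed_Ici (a := 0))
    rw [← closure_ball 0 hw0]
    exact (hclosed.closure_subset_iff.2 fun y hy ↦
      ⟨ball_subset_closedBall hy, (hpos y hy).le⟩).trans Set.inter_subset_right
  have hw_mem : w ∈ closedBall (0 : E) ‖w‖ := mem_closedBall_zero_iff.2 le_rfl
  have huw0 : u w = 0 := le_antisymm huw (hnonneg hw_mem)
  exact ⟨w, hw_ball hw_mem, huw0, fun y hy ↦ by simpa [huw0] using hnonneg hy⟩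

theorem re_mul_le_zero_of_isMinOn_closedBall {p : ℂ → ℂ} {d z : ℂ} (hp : HasDerivAt p d z)
    (hmin : IsMinOn (fun w ↦ (p w).re) (closedBall 0 ‖z‖) z) : (z * d).re ≤ 0 := by
  have hre := reCLM.hasFDerivAt.comp z (hp.hasFDerivAt.restrictScalars ℝ)
  have hcone : -z ∈ posTangentConeAt (closedBall 0 ‖z‖) z :=
    mem_posTangentConeAt_of_segment_subset <| (convex_closedBall 0 ‖z‖).segment_subset
      (mem_closedBall_zero_iff.2 le_rfl) (by simp)
  simpa [mul_comm] using hmin.localize.hasFDerivWithinAt_nonneg hre.hasFDerivWithinAt hcone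

theorem im_mul_eq_zero_of_isMinOn_sphere {p : ℂ → ℂ} {d z : ℂ} (hp : HasDerivAt p d z)
    (hmin : IsMinOn (fun w ↦ (p w).re) (sphere 0 ‖z‖) z) : (z * d).im = 0 := by
  have hcurve : HasDerivAt (fun ζ ↦ z * exp (ζ * I)) (z * I) 0 := by
    simpa using ((hasDerivAt_id (0 : ℂ)).mul_const I).cexp.const_mul z
  have hre := (HasDerivAt.comp (0 : ℂ) (by simpa using hp) hcurve).real_of_complex
  have hloc : IsLocalMin (fun θ : ℝ ↦ (p (z * exp (θ * I))).re) 0 := by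
    refine Filter.Eventually.of_forall fun θ ↦ ?_
    simpa using hmin (by simp [norm_exp_ofReal_mul_I] : z * exp (θ * I) ∈ sphere 0 ‖z‖)
  have := hloc.hasDerivAt_eq_zero hre
  simp only [mul_re, mul_im, I_re, I_im] at this ⊢
  linarith

theorem re_pos_of_re_add_mul_deriv_pos {c : ℂ} (hc : 0 ≤ c.re) {p : ℂ → ℂ} {R : ℝ}
    (hp : DifferentiableOn ℂ p (ball 0 R)) (hp0 : 0 < (p 0).re)
    (h : ∀ z ∈ ball (0 : ℂ) R, 0 < (p z + c * z * deriv p z).re) :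
    ∀ z ∈ ball (0 : ℂ) R, 0 < (p z).re := by
  intro z hz
  by_contra! hpz
  obtain ⟨w, hw, hpw, hmin⟩ := exists_zero_isMinOn_closedBall (u := fun w ↦ (p w).re)
    (continuous_re.comp_continuousOn hp.continuousOn) hp0 hz hpz
  have hd : HasDerivAt p (deriv p w) w :=
    (hp.differentiableAt (isOpen_ball.mem_nhds hw)).hasDerivAt
  have hre := re_mul_le_zero_of_isMinOn_closedBall hd hmin
  have him := im_mul_eq_zero_of_isMinOn_sphere hd (hmin.on_subset sphere_subset_closedBall)
  have hw_pos := h w hw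
  rw [add_re, hpw, zero_add, mul_assoc, mul_re, him, mul_zero, sub_zero] at hw_pos
  exact hw_pos.not_ge (mul_nonpos_of_nonneg_of_nonpos hc hre)

theorem injOn_of_re_deriv_pos {U : Set ℂ} (hU : Convex ℝ U) (hUo : IsOpen U) {f : ℂ → ℂ}
    (hf : DifferentiableOn ℂ f U) (h : ∀ z ∈ U, 0 < (deriv f z).re) : Set.InjOn f U := by
  intro z hz w hw hfzw
  by_contra hne
  have hwz : w - z ≠ 0 := sub_ne_zero.2 (Ne.symm hne)
  have hγ : ∀ t ∈ Set.Icc (0 : ℝ) 1, z + t * (w - z) ∈ U := fun t ht ↦ by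
    simpa [real_smul] using hU.add_smul_sub_mem hz hw ht
  set φ : ℝ → ℝ := fun t ↦ (f (z + t * (w - z)) / (w - z)).re
  have hφ : ∀ t ∈ Set.Icc (0 : ℝ) 1, HasDerivAt φ (deriv f (z + t * (w - z))).re t := by
    intro t ht
    have hft := (hf.differentiableAt (hUo.mem_nhds (hγ t ht))).hasDerivAt
    have hline := ((hasDerivAt_id (t : ℂ)).mul_const (w - z)).const_add z
    simpa [hwz] using ((hft.comp (t : ℂ) hline).div_const (w - z)).real_of_complex
  have hmono : StrictMonoOn φ (Set.Icc 0 1) :=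
    strictMonoOn_of_hasDerivWithinAt_pos (convex_Icc 0 1)
      (fun t ht ↦ (hφ t ht).continuousAt.continuousWithinAt)
      (fun t ht ↦ (hφ t (interior_subset ht)).hasDerivWithinAt)
      (fun t ht ↦ h _ (hγ t (interior_subset ht)))
  have := hmono ⟨le_rfl, zero_le_one⟩ ⟨zero_le_one, le_rfl⟩ zero_lt_one
  simp [φ, hfzw] at this

theorem L_alpha_univalent_general (α : ℝ)
    (f : ℂ → ℂ) (hf : DifferentiableOn ℂ f (Metric.ball (0 : ℂ) 1))
    (hf1 : deriv f 0 = 1)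
    (hcond : ∀ z ∈ Metric.ball (0 : ℂ) 1,
      0 < (deriv f z + ((1 + Complex.exp (α * Complex.I)) / 2) * z * deriv (deriv f) z).re) :
    Set.InjOn f (Metric.ball (0 : ℂ) 1) := by
  have hc : 0 ≤ ((1 + exp (α * I)) / 2).re := by
    have : ((1 + exp (α * I)) / 2).re = (1 + Real.cos α) / 2 := by simp [exp_ofReal_mul_I_re]
    linarith [Real.neg_one_le_cos α]
  have hf' : DifferentiableOn ℂ (deriv f) (ball 0 1) := hf.deriv isOpen_ball
  have hre_pos := re_pos_of_re_add_mul_deriv_pos hc hf' (by simp [hf1]) hcond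
  exact injOn_of_re_deriv_pos (convex_ball 0 1) isOpen_ball hf hre_pos

theorem L_alpha_univalent (α : ℝ) (hα : -π < α ∧ α ≤ π)
    (f : ℂ → ℂ) (hf : DifferentiableOn ℂ f (Metric.ball (0 : ℂ) 1))
    (hf0 : f 0 = 0) (hf1 : deriv f 0 = 1)
    (hcond : ∀ z ∈ Metric.ball (0 : ℂ) 1,
      0 < (deriv f z + ((1 + Complex.exp (α * Complex.I)) / 2) * z * deriv (deriv f) z).re) :
    Set.InjOn f (Metric.ball (0 : ℂ) 1) :=
  L_alpha_univalent_general α f hf hf1 hcond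
end

section
/- Let 0 ≤ β < 1, α ∈ (−π, π], and let f(z) = z + Σ_{n≥2} a_n z^n be analytic on the open unit disc with Re(f'(z) + ((1+e^{iα})/2)·z·f''(z)) > β for all |z| < 1. Then for every n ≥ 2, |a_n| ≤ 4(1−β) / (n·√(2[n²+1+(n²−1)cos α])). -/
open Complex Metric Real

/-!
With `c = (1 + e^{iα}) / 2`, the function `p = f' + c z f''` satisfies `Re p > β` on the disc and
has Taylor coefficients `b_{n-1} = n a_n (1 + (n - 1) c) = n a_n (n + 1 + (n - 1) e^{iα}) / 2`,
with `b_0 = 1`. Carathéodory's inequality `|b_k| ≤ 2 (Re b_0 - β)` (`k ≥ 1`) then gives the bound.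
It is proved on the circle `|z| = r`: writing `Re p - β = (p + conj p) / 2 - β`, only `p`
contributes to the `k`-th Fourier coefficient, which is therefore `π b_k r^k`, while `Re p - β > 0`
integrates to `2π (Re b_0 - β)`; finally let `r → 1`.
-/

theorem summable_pow_mul_norm_mul_pow {a : ℕ → ℂ} {R r : ℝ}
    (ha : ∀ z ∈ ball (0 : ℂ) R, Summable fun n ↦ a n * z ^ n) (hr0 : 0 ≤ r) (hrR : r < R)
    (k : ℕ) : Summable fun n : ℕ ↦ (n : ℝ) ^ k * ‖a n‖ * r ^ n := by
  obtain ⟨ρ, hrρ, hρR⟩ := exists_between hrR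
  have hρ0 : 0 < ρ := hr0.trans_lt hrρ
  have hρ : (ρ : ℂ) ∈ ball (0 : ℂ) R := by
    rw [mem_ball_zero_iff, norm_real, Real.norm_of_nonneg hρ0.le]; linarith
  obtain ⟨C, hC⟩ := ((ha _ hρ).tendsto_atTop_zero.norm.bddAbove_range)
  have hgeom : Summable fun n : ℕ ↦ (n : ℝ) ^ k * (r / ρ) ^ n := by
    refine summable_pow_mul_geometric_of_norm_lt_one k ?_
    rw [norm_div, Real.norm_of_nonneg hr0, Real.norm_of_nonneg hρ0.le, div_lt_one hρ0]
    linarith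
  refine .of_nonneg_of_le (fun n ↦ by positivity) (fun n ↦ ?_) (hgeom.mul_right C)
  have hbound : ‖a n‖ * ρ ^ n ≤ C := by
    simpa [norm_mul, norm_pow, norm_real, Real.norm_of_nonneg hρ0.le] using hC ⟨n, rfl⟩
  calc (n : ℝ) ^ k * ‖a n‖ * r ^ n = (n : ℝ) ^ k * (r / ρ) ^ n * (‖a n‖ * ρ ^ n) := by
        rw [div_pow]; field_simp
    _ ≤ (n : ℝ) ^ k * (r / ρ) ^ n * C := by gcongr

theorem hasSum_deriv_of_hasSum {a : ℕ → ℂ} {g : ℂ → ℂ} {R : ℝ}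
    (hg : ∀ z ∈ ball (0 : ℂ) R, HasSum (fun n ↦ a n * z ^ n) (g z)) :
    ∀ z ∈ ball (0 : ℂ) R, HasSum (fun n : ℕ ↦ (n + 1) * a (n + 1) * z ^ n) (deriv g z) := by
  intro z hz
  have hzR : ‖z‖ < R := mem_ball_zero_iff.mp hz
  obtain ⟨r, hzr, hrR⟩ := exists_between hzR
  have hr0 : 0 < r := (norm_nonneg z).trans_lt hzr
  replace hzr : z ∈ ball (0 : ℂ) r := mem_ball_zero_iff.mpr hzr
  set u : ℕ → ℝ := fun n ↦ n * ‖a n‖ * r ^ (n - 1)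
  have hu : Summable u := by
    refine ((summable_pow_mul_norm_mul_pow (hg · · |>.summable) hr0.le hrR 1).div_const
      r).congr fun n ↦ ?_
    rcases n with _ | n
    · simp [u]
    · simp only [u, pow_succ, Nat.add_sub_cancel]; field_simp
  have hderiv : ∀ (n : ℕ) y, y ∈ ball (0 : ℂ) r →
      HasDerivAt (fun w ↦ a n * w ^ n) (n * a n * y ^ (n - 1)) y := fun n y _ ↦ by
    simpa [mul_comm, mul_left_comm, mul_assoc] using (hasDerivAt_pow n y).const_mul (a n)
  have hbound : ∀ (n : ℕ) y, y ∈ ball (0 : ℂ) r → ‖(n : ℂ) * a n * y ^ (n - 1)‖ ≤ u n := by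
    intro n y hy
    simp only [norm_mul, norm_pow, Complex.norm_natCast, u]
    gcongr
    exact (mem_ball_zero_iff.mp hy).le
  have hsum0 : Summable fun n ↦ a n * (0 : ℂ) ^ n := (hg 0 (mem_ball_self (hr0.trans hrR))).summable
  have hdiff := hasDerivAt_tsum_of_isPreconnected hu isOpen_ball
    (convex_ball (0 : ℂ) r).isPreconnected hderiv hbound (mem_ball_self hr0) hsum0 hzr
  have heq : g =ᶠ[nhds z] fun w ↦ ∑' n, a n * w ^ n :=
    Filter.eventuallyEq_of_mem (isOpen_ball.mem_nhds hz) fun w hw ↦ (hg w hw).tsum_eq.symm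
  rw [(hdiff.congr_of_eventuallyEq heq).deriv]
  have hS := (Summable.of_norm_bounded hu fun n ↦ hbound n z hzr).hasSum
  simpa using (hasSum_nat_add_iff' 1).mpr hS

theorem hasSum_deriv_add_mul_deriv_deriv {a : ℕ → ℂ} {f : ℂ → ℂ} {R : ℝ} (c : ℂ)
    (hf : ∀ z ∈ ball (0 : ℂ) R, HasSum (fun n ↦ a n * z ^ n) (f z)) :
    ∀ z ∈ ball (0 : ℂ) R, HasSum (fun n : ℕ ↦ (n + 1) * a (n + 1) * (1 + n * c) * z ^ n)
      (deriv f z + c * z * deriv (deriv f) z) := by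
  intro z hz
  have h1 := hasSum_deriv_of_hasSum hf z hz
  have h2 := ((hasSum_deriv_of_hasSum (hasSum_deriv_of_hasSum hf) z hz).mul_left (c * z))
  set w : ℕ → ℂ := fun n ↦ c * n * (n + 1) * a (n + 1) * z ^ n
  have hw : HasSum w (c * z * deriv (deriv f) z) := by
    refine (hasSum_nat_add_iff' 1).mp ?_
    simp only [Finset.range_one, Finset.sum_singleton, w, Nat.cast_zero, mul_zero, zero_mul,
      sub_zero]
    refine h2.congr_fun fun n ↦ ?_
    push_cast; ring
  exact (h1.add hw).congr_fun fun n ↦ by simp only [w]; ring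

theorem integral_exp_int_mul_mul_I (j : ℤ) :
    ∫ θ in (0 : ℝ)..2 * π, exp (j * θ * I) = if j = 0 then (2 * π : ℂ) else 0 := by
  split_ifs with hj
  · simp [hj]
  · have hjI : (j : ℂ) * I ≠ 0 := mul_ne_zero (Int.cast_ne_zero.mpr hj) I_ne_zero
    simp_rw [mul_right_comm _ _ I]
    rw [integral_exp_mul_complex hjI]
    have : (j : ℂ) * I * ((2 * π : ℝ) : ℂ) = j * (2 * π * I) := by push_cast; ring
    rw [this, exp_int_mul_two_pi_mul_I]
    simp

section CircleFourier

variable {b : ℕ → ℂ} {r : ℝ} {P : ℝ → ℂ}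

theorem hasSum_integral_mul_exp (hr : 0 ≤ r) (hb : Summable fun n ↦ ‖b n‖ * r ^ n)
    (hP : ∀ θ : ℝ, HasSum (fun n ↦ b n * (r * exp (θ * I)) ^ n) (P θ)) (m : ℤ) :
    HasSum (fun n : ℕ ↦ b n * r ^ n * ∫ θ in (0 : ℝ)..2 * π, exp (((n - m : ℤ) : ℂ) * θ * I))
      (∫ θ in (0 : ℝ)..2 * π, P θ * exp (-m * θ * I)) := by
  have hterm : ∀ (n : ℕ) (θ : ℝ), b n * (r * exp (θ * I)) ^ n * exp (-m * θ * I) =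
      b n * r ^ n * exp (((n - m : ℤ) : ℂ) * θ * I) := fun n θ ↦ by
    rw [mul_pow, ← Complex.exp_nat_mul, mul_assoc, mul_assoc, ← Complex.exp_add, ← mul_assoc]
    push_cast; ring_nf
  have hsum := intervalIntegral.hasSum_integral_of_dominated_convergence
    (F := fun n θ ↦ b n * (r * exp (θ * I)) ^ n * exp (-m * θ * I)) (a := 0) (b := 2 * π)
    (μ := MeasureTheory.volume) (fun n _ ↦ ‖b n‖ * r ^ n)
    (fun n ↦ (by fun_prop : Continuous _).aestronglyMeasurable)
    (fun n ↦ .of_forall fun θ _ ↦ by simp [norm_exp, abs_of_nonneg hr])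
    (.of_forall fun _ _ ↦ hb) intervalIntegrable_const
    (.of_forall fun θ _ ↦ (hP θ).mul_right _)
  simpa only [hterm, intervalIntegral.integral_const_mul] using hsum

variable (hr : 0 ≤ r) (hb : Summable fun n ↦ ‖b n‖ * r ^ n)
  (hP : ∀ θ : ℝ, HasSum (fun n ↦ b n * (r * exp (θ * I)) ^ n) (P θ))
include hr hb hP

theorem integral_mul_exp_neg_natCast_mul (k : ℕ) :
    ∫ θ in (0 : ℝ)..2 * π, P θ * exp (-k * θ * I) = 2 * π * b k * r ^ k := by
  have hsum := hasSum_integral_mul_exp hr hb hP k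
  rw [Int.cast_natCast] at hsum
  rw [hsum.unique (hasSum_single k fun n hn ↦ ?_)]
  · simp; ring
  · rw [integral_exp_int_mul_mul_I, if_neg (by omega), mul_zero]

theorem integral_mul_exp_natCast_mul_eq_zero {k : ℕ} (hk : k ≠ 0) :
    ∫ θ in (0 : ℝ)..2 * π, P θ * exp (k * θ * I) = 0 := by
  have hsum := hasSum_integral_mul_exp hr hb hP (-k)
  simp only [Int.cast_neg, Int.cast_natCast, neg_neg] at hsum
  refine hsum.unique ?_
  convert hasSum_zero with n
  rw [integral_exp_int_mul_mul_I, if_neg (by omega), mul_zero]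

open ComplexConjugate in
theorem norm_coeff_mul_pow_le_of_re_gt (hPc : Continuous P) {β : ℝ} (hre : ∀ θ, β < (P θ).re)
    {k : ℕ} (hk : k ≠ 0) : ‖b k‖ * r ^ k ≤ 2 * ((b 0).re - β) := by
  set E : ℝ → ℂ := fun θ ↦ exp (-k * θ * I)
  have hEc : Continuous E := by fun_prop
  have hE : ∫ θ in (0 : ℝ)..2 * π, E θ = 0 := by
    simpa [E, hk] using integral_exp_int_mul_mul_I (-k)
  have hconj : ∫ θ in (0 : ℝ)..2 * π, conj (P θ) * E θ = 0 := by
    have h : ∀ θ : ℝ, conj (P θ) * E θ = conj (P θ * exp (k * θ * I)) := fun θ ↦ by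
      simp [E, ← exp_conj]
    simp_rw [h, intervalIntegral.intervalIntegral_conj,
      integral_mul_exp_natCast_mul_eq_zero hr hb hP hk, map_zero]
  have hfourier : ∫ θ in (0 : ℝ)..2 * π, (((P θ).re - β : ℝ) : ℂ) * E θ = π * (b k * r ^ k) := by
    have h : ∀ θ : ℝ, (((P θ).re - β : ℝ) : ℂ) * E θ =
        (1 / 2 : ℂ) * (P θ * E θ) + ((1 / 2 : ℂ) * (conj (P θ) * E θ) + -β * E θ) := fun θ ↦ by
      rw [ofReal_sub, re_eq_add_conj]; ring
    simp_rw [h]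
    rw [intervalIntegral.integral_add, intervalIntegral.integral_add,
      intervalIntegral.integral_const_mul, intervalIntegral.integral_const_mul,
      intervalIntegral.integral_const_mul, integral_mul_exp_neg_natCast_mul hr hb hP, hconj, hE]
    · ring
    all_goals exact Continuous.intervalIntegrable (by fun_prop) _ _
  have hmean : ∫ θ in (0 : ℝ)..2 * π, (P θ).re = 2 * π * (b 0).re := by
    have h := integral_mul_exp_neg_natCast_mul hr hb hP 0
    simp only [CharP.cast_eq_zero, neg_zero, zero_mul, Complex.exp_zero, mul_one, pow_zero] at h
    have := intervalIntegral.intervalIntegral_re (μ := MeasureTheory.volume)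
      (hPc.intervalIntegrable 0 (2 * π))
    simp_all
  have hnorm : ‖∫ θ in (0 : ℝ)..2 * π, (((P θ).re - β : ℝ) : ℂ) * E θ‖ ≤
      2 * π * ((b 0).re - β) := by
    calc _ ≤ ∫ θ in (0 : ℝ)..2 * π, ‖(((P θ).re - β : ℝ) : ℂ) * E θ‖ :=
          intervalIntegral.norm_integral_le_integral_norm (by positivity)
      _ = ∫ θ in (0 : ℝ)..2 * π, ((P θ).re - β) := by
          refine intervalIntegral.integral_congr fun θ _ ↦ ?_
          have hEθ : ‖E θ‖ = 1 := by simp [E, norm_exp]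
          rw [norm_mul, hEθ, mul_one, norm_real, Real.norm_of_nonneg (sub_pos.mpr (hre θ)).le]
      _ = 2 * π * ((b 0).re - β) := by
          rw [intervalIntegral.integral_sub (Continuous.intervalIntegrable (by fun_prop) _ _)
            intervalIntegrable_const, hmean]
          simp; ring
  rw [hfourier, norm_mul, norm_real, Real.norm_of_nonneg pi_pos.le, norm_mul, norm_pow,
    norm_real, Real.norm_of_nonneg hr] at hnorm
  nlinarith [pi_pos]

end CircleFourier

theorem norm_coeff_le_of_re_gt {b : ℕ → ℂ} {p : ℂ → ℂ} {β : ℝ}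
    (hp : ∀ z ∈ ball (0 : ℂ) 1, HasSum (fun n ↦ b n * z ^ n) (p z))
    (hpc : ContinuousOn p (ball 0 1)) (hre : ∀ z ∈ ball (0 : ℂ) 1, β < (p z).re)
    {k : ℕ} (hk : k ≠ 0) : ‖b k‖ ≤ 2 * ((b 0).re - β) := by
  have hcircle : ∀ r ∈ Set.Ioo (0 : ℝ) 1, ‖b k‖ * r ^ k ≤ 2 * ((b 0).re - β) := by
    rintro r ⟨hr0, hr1⟩
    have hmem : ∀ θ : ℝ, (r : ℂ) * exp (θ * I) ∈ ball (0 : ℂ) 1 := fun θ ↦ by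
      simpa [abs_of_pos hr0] using hr1
    have hb : Summable fun n ↦ ‖b n‖ * r ^ n := by
      simpa using summable_pow_mul_norm_mul_pow (hp · · |>.summable) hr0.le hr1 0
    exact norm_coeff_mul_pow_le_of_re_gt hr0.le hb (fun θ ↦ hp _ (hmem θ))
      (hpc.comp_continuous (by fun_prop) hmem) (fun θ ↦ hre _ (hmem θ)) hk
  refine le_of_tendsto ?_ (Filter.eventually_of_mem (Ioo_mem_nhdsLT zero_lt_one) hcircle)
  simpa using ((continuous_const.mul (continuous_pow k)).tendsto (1 : ℝ)).mono_left
    nhdsWithin_le_nhds (f := fun r : ℝ ↦ ‖b k‖ * r ^ k)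

theorem norm_ofReal_add_mul_exp_mul_I (x y α : ℝ) :
    ‖(x : ℂ) + y * exp (α * I)‖ = √(x ^ 2 + y ^ 2 + 2 * x * y * Real.cos α) := by
  have h : (x : ℂ) + y * exp (α * I) =
      (x + y * Real.cos α : ℝ) + (y * Real.sin α : ℝ) * I := by
    rw [exp_mul_I, ← ofReal_cos, ← ofReal_sin]; push_cast; ring
  rw [norm_def, h, normSq_add_mul_I]
  congr 1
  linear_combination y ^ 2 * Real.sin_sq_add_cos_sq α

theorem R_alpha_beta_coeff_bound_general (β α : ℝ)
    (f : ℂ → ℂ) (a : ℕ → ℂ) (ha1 : a 1 = 1)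
    (hsum : ∀ z ∈ Metric.ball (0 : ℂ) 1, HasSum (fun n : ℕ => a n * z ^ n) (f z))
    (hf : DifferentiableOn ℂ f (Metric.ball (0 : ℂ) 1))
    (hcond : ∀ z ∈ Metric.ball (0 : ℂ) 1,
      β < (deriv f z + ((1 + Complex.exp (α * Complex.I)) / 2) * z * deriv (deriv f) z).re) :
    ∀ n : ℕ, 2 ≤ n →
      ‖a n‖ ≤ 4 * (1 - β) /
        (n * Real.sqrt (2 * ((n ^ 2 + 1) + ((n : ℝ) ^ 2 - 1) * Real.cos α))) := by
  intro n hn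
  set c : ℂ := (1 + exp (α * I)) / 2
  have hfa : AnalyticOnNhd ℂ f (ball 0 1) := hf.analyticOnNhd isOpen_ball
  have hpc : ContinuousOn (fun z ↦ deriv f z + c * z * deriv (deriv f) z) (ball 0 1) :=
    hfa.deriv.continuousOn.add ((continuous_const_mul c).continuousOn.mul
      hfa.deriv.deriv.continuousOn)
  have hbound := norm_coeff_le_of_re_gt (hasSum_deriv_add_mul_deriv_deriv c hsum) hpc hcond
    (k := n - 1) (by omega)
  obtain ⟨m, rfl⟩ : ∃ m, n = m + 1 := ⟨n - 1, by omega⟩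
  have hnorm : ‖1 + (m : ℂ) * c‖ =
      √(2 * (((m + 1 : ℕ) ^ 2 + 1) + ((m + 1 : ℕ) ^ 2 - 1) * Real.cos α)) / 2 := by
    have h : 1 + (m : ℂ) * c = (((m + 2 : ℝ) : ℂ) + (m : ℝ) * exp (α * I)) / 2 := by
      simp only [c]; push_cast; ring
    rw [h, norm_div, norm_ofReal_add_mul_exp_mul_I, RCLike.norm_ofNat]
    push_cast; ring_nf
  have hpos : 0 < √(2 * (((m + 1 : ℕ) ^ 2 + 1) + ((m + 1 : ℕ) ^ 2 - 1) * Real.cos α)) := by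
    have hcos : 0 ≤ ((m + 1 : ℕ) ^ 2 - 1 : ℝ) * (1 + Real.cos α) :=
      mul_nonneg (by push_cast; nlinarith [Nat.cast_nonneg (α := ℝ) m])
        (by linarith [Real.neg_one_le_cos α])
    exact Real.sqrt_pos.mpr (by linarith)
  simp only [Nat.add_sub_cancel, CharP.cast_eq_zero, zero_add, zero_mul, add_zero, mul_one, ha1,
    one_re, norm_mul, hnorm, ← Nat.cast_succ, Complex.norm_natCast] at hbound
  rw [le_div_iff₀ (by positivity)]
  linear_combination 2 * hbound

theorem R_alpha_beta_coeff_bound (β α : ℝ) (hβ : 0 ≤ β ∧ β < 1) (hα : -π < α ∧ α ≤ π)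
    (f : ℂ → ℂ) (a : ℕ → ℂ) (ha0 : a 0 = 0) (ha1 : a 1 = 1)
    (hsum : ∀ z ∈ Metric.ball (0 : ℂ) 1, HasSum (fun n : ℕ => a n * z ^ n) (f z))
    (hf : DifferentiableOn ℂ f (Metric.ball (0 : ℂ) 1))
    (hcond : ∀ z ∈ Metric.ball (0 : ℂ) 1,
      β < (deriv f z + ((1 + Complex.exp (α * Complex.I)) / 2) * z * deriv (deriv f) z).re) :
    ∀ n : ℕ, 2 ≤ n →
      ‖a n‖ ≤ 4 * (1 - β) /
        (n * Real.sqrt (2 * ((n ^ 2 + 1) + ((n : ℝ) ^ 2 - 1) * Real.cos α))) :=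
  R_alpha_beta_coeff_bound_general β α f a ha1 hsum hf hcond
end

section
/- Let 0 ≤ β < 1, α ∈ (−π, π], and let f(z) = z + Σ_{n≥2} a_n z^n be analytic on the open unit disc with Re(f'(z) + ((1+e^{iα})/2)·z·f''(z)) > β for all |z| < 1. Then the second section s₂(z) = z + a₂ z² satisfies Re(s₂'(z)) > 0, hence s₂ is univalent, on the disc |z| < √(10+6cos α)/(4(1−β)). -/
/-!
With `c = (1 + e^{iα})/2`, the function `g = f' + c z f''` has `re g > β` on the disc, `g 0 = 1`
and `g' 0 = (1 + c) f''(0) = 2 (1 + c) a₂`. Composing `g` with a Möbius map of the half-plane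
`re w > β` onto the disc and applying Schwarz's lemma gives `|g'(0)| ≤ 2 (1 - β)`; as
`|1 + c| = √(10 + 6 cos α) / 2`, this is `|a₂| √(10 + 6 cos α) ≤ 2 (1 - β)`. On the stated disc
therefore `|a₂ (x + y)| < 1`, so `re s₂'(z) = re (1 + 2 a₂ z) > 0`, and
`s₂ x - s₂ y = (x - y) (1 + a₂ (x + y))` vanishes only when `x = y`.
-/

open Complex Metric Real
open scoped NNReal

theorem hasFPowerSeriesOnBall_ofScalars_of_hasSum {f : ℂ → ℂ} {a : ℕ → ℂ} {r : ℝ≥0}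
    (hr : 0 < r) (hsum : ∀ z ∈ ball (0 : ℂ) r, HasSum (fun n ↦ a n * z ^ n) (f z)) :
    HasFPowerSeriesOnBall f (FormalMultilinearSeries.ofScalars ℂ a) 0 r where
  r_le := by
    refine ENNReal.le_of_forall_nnreal_lt fun ρ hρ ↦ ?_
    have hρr : ((ρ : ℝ) : ℂ) ∈ ball (0 : ℂ) r := by
      simpa [abs_of_nonneg ρ.coe_nonneg] using hρ
    refine FormalMultilinearSeries.le_radius_of_tendsto _ (l := 0) ?_
    simpa [FormalMultilinearSeries.ofScalars_norm, abs_of_nonneg ρ.coe_nonneg] using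
      (hsum _ hρr).summable.tendsto_atTop_zero.norm
  r_pos := by simpa using hr
  hasSum {y} hy := by
    rw [eball_coe] at hy
    simpa [FormalMultilinearSeries.ofScalars_apply_eq, mul_comm] using hsum y hy

theorem HasFPowerSeriesAt.iteratedDeriv_ofScalars {f : ℂ → ℂ} {a : ℕ → ℂ}
    (hf : HasFPowerSeriesAt f (FormalMultilinearSeries.ofScalars ℂ a) 0) (n : ℕ) :
    iteratedDeriv n f 0 = n.factorial * a n := by
  obtain ⟨r, hr⟩ := hf
  rw [iteratedDeriv_eq_iteratedFDeriv, ← hr.factorial_smul,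
    FormalMultilinearSeries.ofScalars_apply_eq]
  simp

theorem norm_sub_one_lt_norm_sub_of_lt_re {β : ℝ} {w : ℂ} (hβ : β < 1) (hw : β < w.re) :
    ‖w - 1‖ < ‖w - (2 * β - 1 : ℝ)‖ := by
  refine lt_of_pow_lt_pow_left₀ 2 (norm_nonneg _) ?_
  simp only [Complex.sq_norm, Complex.normSq_apply, sub_re, sub_im, one_re, one_im, ofReal_re,
    ofReal_im]
  nlinarith [mul_pos (sub_pos.2 hβ) (sub_pos.2 hw)]

theorem norm_deriv_le_of_lt_re {g : ℂ → ℂ} {c : ℂ} {R β : ℝ} (hR : 0 < R)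
    (hg : DifferentiableOn ℂ g (ball c R)) (hgc : g c = 1)
    (hre : ∀ z ∈ ball c R, β < (g z).re) :
    ‖deriv g c‖ ≤ 2 * (1 - β) / R := by
  have hβ : β < 1 := by simpa [hgc] using hre c (mem_ball_self hR)
  have hden : ∀ z ∈ ball c R, g z - (2 * β - 1 : ℝ) ≠ 0 := fun z hz h ↦ by
    have := norm_sub_one_lt_norm_sub_of_lt_re hβ (hre z hz)
    rw [h, norm_zero] at this
    exact (norm_nonneg _).not_gt this
  set m : ℂ → ℂ := fun z ↦ (g z - 1) / (g z - (2 * β - 1 : ℝ))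
  have hmc : m c = 0 := by simp [m, hgc]
  have hmaps : Set.MapsTo m (ball c R) (closedBall (m c) 1) := fun z hz ↦ by
    rw [hmc, mem_closedBall_zero_iff, norm_div, div_le_one (norm_pos_iff.2 (hden z hz))]
    exact (norm_sub_one_lt_norm_sub_of_lt_re hβ (hre z hz)).le
  have hm : HasDerivAt m (deriv g c / (2 * (1 - β) : ℝ)) c := by
    have hgc' := (hg.differentiableAt (ball_mem_nhds c hR)).hasDerivAt
    refine ((hgc'.sub_const 1).div (hgc'.sub_const _) (hden c (mem_ball_self hR))).congr_deriv ?_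
    have hne : (2 * (1 - β) : ℝ) ≠ (0 : ℂ) := by exact_mod_cast (by linarith : 2 * (1 - β) ≠ 0)
    have hgap : (1 : ℂ) - (2 * β - 1 : ℝ) = (2 * (1 - β) : ℝ) := by push_cast; ring
    rw [hgc, hgap]
    field_simp
    ring
  have hmd : DifferentiableOn ℂ m (ball c R) := (hg.sub_const 1).div (hg.sub_const _) hden
  have hschwarz := norm_deriv_le_div_of_mapsTo_ball hmd hmaps hR
  rw [hm.deriv, norm_div, Complex.norm_real, Real.norm_of_nonneg (by linarith),
    div_le_div_iff₀ (by linarith) hR] at hschwarz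
  rw [le_div_iff₀ hR]
  linarith

theorem hasDerivAt_deriv_add_mul_deriv_deriv {f : ℂ → ℂ} (c : ℂ) (hf : AnalyticAt ℂ f 0) :
    HasDerivAt (fun z ↦ deriv f z + c * z * deriv (deriv f) z)
      ((1 + c) * deriv (deriv f) 0) 0 := by
  have hf' := hf.deriv.differentiableAt.hasDerivAt
  have hf'' := hf.deriv.deriv.differentiableAt.hasDerivAt
  refine (hf'.add (((hasDerivAt_id 0).const_mul c).mul hf'')).congr_deriv ?_
  simp only [id, mul_zero, zero_mul, add_zero, mul_one]
  ring

theorem norm_one_add_mul_deriv_deriv_le {f : ℂ → ℂ} {c : ℂ} {β : ℝ}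
    (hf : AnalyticOnNhd ℂ f (ball 0 1)) (hf0 : deriv f 0 = 1)
    (hre : ∀ z ∈ ball (0 : ℂ) 1, β < (deriv f z + c * z * deriv (deriv f) z).re) :
    ‖1 + c‖ * ‖deriv (deriv f) 0‖ ≤ 2 * (1 - β) := by
  have hg : DifferentiableOn ℂ (fun z ↦ deriv f z + c * z * deriv (deriv f) z) (ball 0 1) :=
    (hf.deriv.add
      ((analyticOnNhd_const.mul analyticOnNhd_id).mul hf.deriv.deriv)).differentiableOn
  have hcar := norm_deriv_le_of_lt_re one_pos hg (by simp [hf0]) hre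
  rwa [(hasDerivAt_deriv_add_mul_deriv_deriv c (hf 0 (mem_ball_self one_pos))).deriv, norm_mul,
    div_one] at hcar

theorem norm_one_add_half_one_add_exp_mul_I (α : ℝ) :
    ‖1 + (1 + exp (α * I)) / 2‖ = √(10 + 6 * Real.cos α) / 2 := by
  have h : 1 + (1 + exp (α * I)) / 2 = ((3 + Real.cos α : ℝ) + (Real.sin α : ℝ) * I) / 2 := by
    rw [exp_mul_I, ← ofReal_cos, ← ofReal_sin]
    push_cast
    ring
  rw [h, norm_div, norm_add_mul_I, Complex.norm_ofNat]
  congr 2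
  nlinarith [Real.sin_sq_add_cos_sq α]

theorem norm_mul_add_lt_one {b x y : ℂ} {r : ℝ} (hb : 2 * ‖b‖ * r ≤ 1) (hx : x ∈ ball (0 : ℂ) r)
    (hy : y ∈ ball (0 : ℂ) r) : ‖b * (x + y)‖ < 1 := by
  rw [mem_ball_zero_iff] at hx hy
  calc ‖b * (x + y)‖ ≤ ‖b‖ * (‖x‖ + ‖y‖) := by
        rw [norm_mul]; exact mul_le_mul_of_nonneg_left (norm_add_le x y) (norm_nonneg b)
    _ < 1 := by
        rcases (norm_nonneg b).eq_or_lt with hb0 | hb0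
        · simp [← hb0]
        · nlinarith [mul_lt_mul_of_pos_left (add_lt_add hx hy) hb0]

theorem re_deriv_add_mul_sq_pos {b z : ℂ} {r : ℝ} (hb : 2 * ‖b‖ * r ≤ 1)
    (hz : z ∈ ball (0 : ℂ) r) : 0 < (deriv (fun w : ℂ ↦ w + b * w ^ 2) z).re := by
  have hd : HasDerivAt (fun w : ℂ ↦ w + b * w ^ 2) (1 + b * (z + z)) z := by
    refine ((hasDerivAt_id z).add ((hasDerivAt_pow 2 z).const_mul b)).congr_deriv ?_
    simp only [Nat.cast_ofNat]
    ring
  rw [hd.deriv, add_re, one_re]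
  linarith [neg_abs_le (b * (z + z)).re, abs_re_le_norm (b * (z + z)),
    norm_mul_add_lt_one hb hz hz]

theorem injOn_add_mul_sq {b : ℂ} {r : ℝ} (hb : 2 * ‖b‖ * r ≤ 1) :
    Set.InjOn (fun w : ℂ ↦ w + b * w ^ 2) (ball 0 r) := by
  intro x hx y hy hxy
  have hfac : (x - y) * (1 + b * (x + y)) = 0 := by
    simp only at hxy
    linear_combination hxy
  have hne : 1 + b * (x + y) ≠ 0 := fun h ↦ by
    have := norm_mul_add_lt_one hb hx hy
    rw [eq_neg_of_add_eq_zero_right h, norm_neg, norm_one] at this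
    exact this.false
  exact sub_eq_zero.1 ((mul_eq_zero.1 hfac).resolve_right hne)

theorem second_section_univalence_general (β α : ℝ)
    (f : ℂ → ℂ) (a : ℕ → ℂ) (ha1 : a 1 = 1)
    (hsum : ∀ z ∈ Metric.ball (0 : ℂ) 1, HasSum (fun n : ℕ => a n * z ^ n) (f z))
    (hcond : ∀ z ∈ Metric.ball (0 : ℂ) 1,
      β < (deriv f z + ((1 + Complex.exp (α * Complex.I)) / 2) * z * deriv (deriv f) z).re) :
    (∀ z ∈ Metric.ball (0 : ℂ) (Real.sqrt (10 + 6 * Real.cos α) / (4 * (1 - β))),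
      0 < (deriv (fun w : ℂ => w + a 2 * w ^ 2) z).re) ∧
    Set.InjOn (fun w : ℂ => w + a 2 * w ^ 2)
      (Metric.ball (0 : ℂ) (Real.sqrt (10 + 6 * Real.cos α) / (4 * (1 - β)))) := by
  have hps := hasFPowerSeriesOnBall_ofScalars_of_hasSum one_pos (by simpa using hsum)
  have hA : AnalyticOnNhd ℂ f (ball 0 1) := by
    simpa [← NNReal.coe_one, ← eball_coe] using hps.analyticOnNhd
  have hf' : deriv f 0 = 1 := by
    simpa [ha1] using hps.hasFPowerSeriesAt.iteratedDeriv_ofScalars 1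
  have hf'' : deriv (deriv f) 0 = 2 * a 2 := by
    simpa [iteratedDeriv_succ] using hps.hasFPowerSeriesAt.iteratedDeriv_ofScalars 2
  have hβ : β < 1 := by simpa [hf'] using hcond 0 (mem_ball_self one_pos)
  have hbound := norm_one_add_mul_deriv_deriv_le hA hf' hcond
  rw [norm_one_add_half_one_add_exp_mul_I, hf'', norm_mul, Complex.norm_two] at hbound
  have hcoef : 2 * ‖a 2‖ * (√(10 + 6 * Real.cos α) / (4 * (1 - β))) ≤ 1 := by
    rw [mul_div_assoc', div_le_one (by linarith)]
    linarith
  exact ⟨fun z hz ↦ re_deriv_add_mul_sq_pos hcoef hz, injOn_add_mul_sq hcoef⟩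

theorem second_section_univalence (β α : ℝ) (hβ : 0 ≤ β ∧ β < 1) (hα : -π < α ∧ α ≤ π)
    (f : ℂ → ℂ) (a : ℕ → ℂ) (ha0 : a 0 = 0) (ha1 : a 1 = 1)
    (hsum : ∀ z ∈ Metric.ball (0 : ℂ) 1, HasSum (fun n : ℕ => a n * z ^ n) (f z))
    (hf : DifferentiableOn ℂ f (Metric.ball (0 : ℂ) 1))
    (hcond : ∀ z ∈ Metric.ball (0 : ℂ) 1,
      β < (deriv f z + ((1 + Complex.exp (α * Complex.I)) / 2) * z * deriv (deriv f) z).re) :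
    (∀ z ∈ Metric.ball (0 : ℂ) (Real.sqrt (10 + 6 * Real.cos α) / (4 * (1 - β))),
      0 < (deriv (fun w : ℂ => w + a 2 * w ^ 2) z).re) ∧
    Set.InjOn (fun w : ℂ => w + a 2 * w ^ 2)
      (Metric.ball (0 : ℂ) (Real.sqrt (10 + 6 * Real.cos α) / (4 * (1 - β)))) :=
  second_section_univalence_general β α f a ha1 hsum hcond
end

section
/- Let 0 ≤ β < 1, α ∈ (−π, π], and define f_x for |x| = 1 by f_x(z) = z + 4(1−β) Σ_{n≥2} x^{n−1} z^n / (n[n+1+(n−1)e^{iα}]). Then f_x is analytic on the open unit disc and satisfies f_x'(z) + ((1+e^{iα})/2)·z·f_x''(z) = (1 + (1−2β)xz)/(1 − xz) for all |z| < 1; in particular Re(f_x'(z) + ((1+e^{iα})/2) z f_x''(z)) > β on Δ. -/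
open Complex Metric Real

/-!
With `c = (1 + e^{iα})/2`, the operator `f ↦ f' + c z f''` multiplies `z^k` by
`k (1 + c (k - 1)) = k (k + 1 + (k - 1) e^{iα}) / 2`, which cancels the denominators of `f_x`
termwise. Hence `f_x' + c z f_x'' = 1 + 2 (1 - β) ∑_{k ≥ 1} (x z)^k`, a geometric series whose sum
`(1 + (1 - 2β) x z)/(1 - x z)` lies in the half-plane `Re > β`. Termwise differentiation is
justified by the Weierstrass M-test on the discs `‖z‖ < r < 1`.
-/

section UnitDisc

variable {F : ℕ → ℂ → ℂ} {u : ℕ → ℝ}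

lemma norm_le_mul_pow_of_mem_ball (hu₀ : ∀ n, 0 ≤ u n)
    (hF : ∀ n, ∀ w ∈ ball (0 : ℂ) 1, ‖F n w‖ ≤ u n * ‖w‖ ^ n) {r : ℝ} (hr : r ≤ 1) (n : ℕ)
    {w : ℂ} (hw : w ∈ ball (0 : ℂ) r) : ‖F n w‖ ≤ u n * r ^ n := by
  rw [mem_ball_zero_iff] at hw
  calc ‖F n w‖ ≤ u n * ‖w‖ ^ n := hF n w (mem_ball_zero_iff.2 (hw.trans_le hr))
    _ ≤ u n * r ^ n := by gcongr; exact hu₀ n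

theorem differentiableOn_tsum_of_norm_le_mul_pow (hd : ∀ n, Differentiable ℂ (F n))
    (hu₀ : ∀ n, 0 ≤ u n) (hu : ∀ r, 0 ≤ r → r < 1 → Summable fun n ↦ u n * r ^ n)
    (hF : ∀ n, ∀ w ∈ ball (0 : ℂ) 1, ‖F n w‖ ≤ u n * ‖w‖ ^ n) :
    DifferentiableOn ℂ (fun w ↦ ∑' n, F n w) (ball 0 1) := by
  intro z hz
  obtain ⟨r, hzr, hr₁⟩ := exists_between (mem_ball_zero_iff.1 hz)
  have hdiff := differentiableOn_tsum_of_summable_norm (hu r ((norm_nonneg z).trans hzr.le) hr₁)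
    (fun n ↦ (hd n).differentiableOn) isOpen_ball
    (fun n _ hw ↦ norm_le_mul_pow_of_mem_ball hu₀ hF hr₁.le n hw)
  exact (hdiff.differentiableAt (isOpen_ball.mem_nhds (mem_ball_zero_iff.2 hzr)))
    |>.differentiableWithinAt

theorem hasSum_deriv_tsum_of_norm_le_mul_pow (hd : ∀ n, Differentiable ℂ (F n))
    (hu₀ : ∀ n, 0 ≤ u n) (hu : ∀ r, 0 ≤ r → r < 1 → Summable fun n ↦ u n * r ^ n)
    (hF : ∀ n, ∀ w ∈ ball (0 : ℂ) 1, ‖F n w‖ ≤ u n * ‖w‖ ^ n) {z : ℂ} (hz : z ∈ ball (0 : ℂ) 1) :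
    HasSum (fun n ↦ deriv (F n) z) (deriv (fun w ↦ ∑' n, F n w) z) := by
  obtain ⟨r, hzr, hr₁⟩ := exists_between (mem_ball_zero_iff.1 hz)
  exact hasSum_deriv_of_summable_norm (hu r ((norm_nonneg z).trans hzr.le) hr₁)
    (fun n ↦ (hd n).differentiableOn) isOpen_ball
    (fun n _ hw ↦ norm_le_mul_pow_of_mem_ball hu₀ hF hr₁.le n hw) (mem_ball_zero_iff.2 hzr)

end UnitDisc

section BoundedCoefficients

variable {a : ℕ → ℂ} {M : ℝ}

lemma summable_natCast_add_two_mul_pow {r : ℝ} (hr₀ : 0 ≤ r) (hr₁ : r < 1) :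
    Summable fun n : ℕ ↦ ((n : ℝ) + 2) * r ^ n := by
  have hr : ‖r‖ < 1 := by rwa [Real.norm_of_nonneg hr₀]
  simpa only [add_mul, pow_one] using
    (summable_pow_mul_geometric_of_norm_lt_one 1 hr).add
      ((summable_geometric_of_lt_one hr₀ hr₁).mul_left 2)

lemma norm_mul_pow_add_le (ha : ∀ n, ‖a n‖ ≤ M) (n k : ℕ) {w : ℂ} (hw : w ∈ ball (0 : ℂ) 1) :
    ‖a n * w ^ (n + k)‖ ≤ M * ‖w‖ ^ n := by
  rw [mem_ball_zero_iff] at hw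
  rw [norm_mul, norm_pow]
  exact mul_le_mul (ha n) (pow_le_pow_of_le_one (norm_nonneg w) hw.le (by omega))
    (by positivity) ((norm_nonneg _).trans (ha 0))

lemma norm_natCast_add_two_mul_mul_pow_succ_le (ha : ∀ n, ‖a n‖ ≤ M) (n : ℕ) {w : ℂ}
    (hw : w ∈ ball (0 : ℂ) 1) :
    ‖((n : ℂ) + 2) * a n * w ^ (n + 1)‖ ≤ M * ((n : ℝ) + 2) * ‖w‖ ^ n := by
  have hn : ‖(n : ℂ) + 2‖ = n + 2 := by exact_mod_cast Complex.norm_natCast (n + 2)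
  calc ‖((n : ℂ) + 2) * a n * w ^ (n + 1)‖ = (n + 2) * ‖a n * w ^ (n + 1)‖ := by
        rw [mul_assoc, norm_mul, hn]
    _ ≤ (n + 2) * (M * ‖w‖ ^ n) := by gcongr; exact norm_mul_pow_add_le ha n 1 hw
    _ = M * ((n : ℝ) + 2) * ‖w‖ ^ n := by ring

theorem differentiableOn_tsum_mul_pow_add_two (ha : ∀ n, ‖a n‖ ≤ M) :
    DifferentiableOn ℂ (fun w ↦ ∑' n, a n * w ^ (n + 2)) (ball 0 1) :=
  differentiableOn_tsum_of_norm_le_mul_pow (fun n ↦ by fun_prop)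
    (fun _ ↦ (norm_nonneg _).trans (ha 0))
    (fun _ hr₀ hr₁ ↦ (summable_geometric_of_lt_one hr₀ hr₁).mul_left M)
    (fun n _ hw ↦ norm_mul_pow_add_le ha n 2 hw)

theorem hasSum_deriv_tsum_mul_pow_add_two (ha : ∀ n, ‖a n‖ ≤ M) {z : ℂ}
    (hz : z ∈ ball (0 : ℂ) 1) :
    HasSum (fun n : ℕ ↦ ((n : ℂ) + 2) * a n * z ^ (n + 1))
      (deriv (fun w ↦ ∑' n, a n * w ^ (n + 2)) z) := by
  have hterm (n : ℕ) : deriv (fun w ↦ a n * w ^ (n + 2)) z = ((n : ℂ) + 2) * a n * z ^ (n + 1) :=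
    (((hasDerivAt_pow (n + 2) z).const_mul (a n)).congr_deriv (by push_cast; ring)).deriv
  simpa only [hterm] using hasSum_deriv_tsum_of_norm_le_mul_pow (fun n ↦ by fun_prop)
    (fun _ ↦ (norm_nonneg _).trans (ha 0))
    (fun _ hr₀ hr₁ ↦ (summable_geometric_of_lt_one hr₀ hr₁).mul_left M)
    (fun n _ hw ↦ norm_mul_pow_add_le ha n 2 hw) hz

theorem hasSum_deriv_deriv_tsum_mul_pow_add_two (ha : ∀ n, ‖a n‖ ≤ M) {z : ℂ}
    (hz : z ∈ ball (0 : ℂ) 1) :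
    HasSum (fun n : ℕ ↦ ((n : ℂ) + 2) * ((n : ℂ) + 1) * a n * z ^ n)
      (deriv (deriv (fun w ↦ ∑' n, a n * w ^ (n + 2))) z) := by
  have hderiv : deriv (fun w ↦ ∑' n, a n * w ^ (n + 2)) =ᶠ[nhds z]
      fun w ↦ ∑' n : ℕ, ((n : ℂ) + 2) * a n * w ^ (n + 1) :=
    Filter.eventually_of_mem (isOpen_ball.mem_nhds hz) fun w hw ↦
      (hasSum_deriv_tsum_mul_pow_add_two ha hw).tsum_eq.symm
  have hterm (n : ℕ) : deriv (fun w ↦ ((n : ℂ) + 2) * a n * w ^ (n + 1)) z =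
      ((n : ℂ) + 2) * ((n : ℂ) + 1) * a n * z ^ n :=
    (((hasDerivAt_pow (n + 1) z).const_mul (((n : ℂ) + 2) * a n)).congr_deriv
      (by push_cast; ring)).deriv
  rw [hderiv.deriv_eq]
  simpa only [hterm] using hasSum_deriv_tsum_of_norm_le_mul_pow (fun n ↦ by fun_prop)
    (fun n ↦ mul_nonneg ((norm_nonneg _).trans (ha 0)) (by positivity))
    (fun _ hr₀ hr₁ ↦ by simpa only [mul_assoc] using
      (summable_natCast_add_two_mul_pow hr₀ hr₁).mul_left M)
    (fun n _ hw ↦ norm_natCast_add_two_mul_mul_pow_succ_le ha n hw) hz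

end BoundedCoefficients

/-- `Re ((1 + (1 - 2β) w) / (1 - w)) - β = (1 - β) (1 - ‖w‖²) / ‖1 - w‖²`. -/
lemma lt_re_one_add_mul_div_one_sub {β : ℝ} (hβ : β < 1) {w : ℂ} (hw : ‖w‖ < 1) :
    β < ((1 + (1 - 2 * (β : ℂ)) * w) / (1 - w)).re := by
  have hw2 : w.re * w.re + w.im * w.im < 1 := by
    rw [← Complex.normSq_apply, ← Complex.sq_norm]
    nlinarith [norm_nonneg w]
  have hns : 0 < Complex.normSq (1 - w) := by
    rw [Complex.normSq_pos, sub_ne_zero]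
    rintro rfl
    simp at hw
  rw [Complex.div_re, ← add_div, lt_div_iff₀ hns]
  simp only [Complex.normSq_apply, Complex.sub_re, Complex.sub_im, Complex.one_re,
    Complex.one_im, Complex.add_re, Complex.add_im, Complex.mul_re, Complex.mul_im,
    Complex.ofReal_re, Complex.ofReal_im, Complex.re_ofNat, Complex.im_ofNat]
  nlinarith [mul_pos (sub_pos.mpr hβ) (sub_pos.mpr hw2)]

def extremalDenom (e : ℂ) (n : ℕ) : ℂ := (n : ℂ) + 2 + 1 + ((n : ℂ) + 2 - 1) * e

/-- The coefficient `x^(k-1) / (k [k + 1 + (k - 1) e])` of `z^k` in `(f_x(z) - z) / (4 (1 - β))`,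
indexed by `n = k - 2`. -/
noncomputable def extremalCoeff (x e : ℂ) (n : ℕ) : ℂ :=
  x ^ (n + 1) / (((n : ℂ) + 2) * extremalDenom e n)

lemma two_le_norm_extremalDenom {e : ℂ} (he : ‖e‖ = 1) (n : ℕ) : 2 ≤ ‖extremalDenom e n‖ := by
  have h₁ : ‖(n : ℂ) + 3‖ = n + 3 := by exact_mod_cast Complex.norm_natCast (n + 3)
  have h₂ : ‖((n : ℂ) + 1) * e‖ = n + 1 := by
    rw [norm_mul, he, mul_one]; exact_mod_cast Complex.norm_natCast (n + 1)
  have h := norm_sub_le_norm_add ((n : ℂ) + 3) (((n : ℂ) + 1) * e)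
  rw [h₁, h₂] at h
  calc (2 : ℝ) = n + 3 - (n + 1) := by ring
    _ ≤ ‖(n : ℂ) + 3 + ((n : ℂ) + 1) * e‖ := h
    _ = ‖extremalDenom e n‖ := by rw [extremalDenom]; ring_nf

lemma extremalDenom_ne_zero {e : ℂ} (he : ‖e‖ = 1) (n : ℕ) : extremalDenom e n ≠ 0 :=
  norm_pos_iff.1 (two_pos.trans_le (two_le_norm_extremalDenom he n))

lemma norm_extremalCoeff_le_one {x e : ℂ} (hx : ‖x‖ = 1) (he : ‖e‖ = 1) (n : ℕ) :
    ‖extremalCoeff x e n‖ ≤ 1 := by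
  have hn : ‖(n : ℂ) + 2‖ = n + 2 := by exact_mod_cast Complex.norm_natCast (n + 2)
  rw [extremalCoeff, norm_div, norm_mul, norm_pow, hx, one_pow, hn]
  apply div_le_one_of_le₀ _ (by positivity)
  nlinarith [two_le_norm_extremalDenom he n, (n.cast_nonneg : (0 : ℝ) ≤ n)]

lemma extremalCoeff_mul_eq {x e : ℂ} (he : ‖e‖ = 1) (n : ℕ) :
    ((n : ℂ) + 2) * extremalCoeff x e n * (1 + (1 + e) / 2 * ((n : ℂ) + 1)) = x ^ (n + 1) / 2 := by
  have hn : (n : ℂ) + 2 ≠ 0 := by exact_mod_cast (n + 1).succ_ne_zero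
  have hD := extremalDenom_ne_zero he n
  rw [extremalCoeff]
  field_simp
  rw [extremalDenom]
  ring

lemma deriv_add_mul_deriv_deriv_extremal {x e : ℂ} (hx : ‖x‖ = 1) (he : ‖e‖ = 1)
    {z : ℂ} (hz : z ∈ ball (0 : ℂ) 1) :
    deriv (fun w ↦ ∑' n, extremalCoeff x e n * w ^ (n + 2)) z + (1 + e) / 2 * z *
        deriv (deriv (fun w ↦ ∑' n, extremalCoeff x e n * w ^ (n + 2))) z =
      x * z / 2 * (1 - x * z)⁻¹ := by
  have ha := norm_extremalCoeff_le_one hx he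
  have hxz : ‖x * z‖ < 1 := by rwa [norm_mul, hx, one_mul, ← mem_ball_zero_iff]
  have hterms : (fun n : ℕ ↦ ((n : ℂ) + 2) * extremalCoeff x e n * z ^ (n + 1) + (1 + e) / 2 * z *
      (((n : ℂ) + 2) * ((n : ℂ) + 1) * extremalCoeff x e n * z ^ n)) =
      fun n : ℕ ↦ x * z / 2 * (x * z) ^ n := by
    ext n
    rw [show x * z / 2 * (x * z) ^ n = x ^ (n + 1) / 2 * z ^ (n + 1) by ring,
      ← extremalCoeff_mul_eq he n]
    ring
  refine HasSum.unique ?_ ((hasSum_geometric_of_norm_lt_one hxz).mul_left _)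
  rw [← hterms]
  exact (hasSum_deriv_tsum_mul_pow_add_two ha hz).add
    ((hasSum_deriv_deriv_tsum_mul_pow_add_two ha hz).mul_left _)

lemma deriv_add_mul_deriv_deriv_id_add_const_mul {g : ℂ → ℂ} {U : Set ℂ} (hU : IsOpen U)
    (hg : DifferentiableOn ℂ g U) (C c : ℂ) {z : ℂ} (hz : z ∈ U) :
    deriv (fun w ↦ w + C * g w) z + c * z * deriv (deriv fun w ↦ w + C * g w) z =
      1 + C * (deriv g z + c * z * deriv (deriv g) z) := by
  have hderiv : ∀ w ∈ U, deriv (fun w ↦ w + C * g w) w = 1 + C * deriv g w := fun w hw ↦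
    ((hasDerivAt_id w).add ((hg.differentiableAt (hU.mem_nhds hw)).hasDerivAt.const_mul C)).deriv
  rw [(Filter.eventuallyEq_of_mem (hU.mem_nhds hz) hderiv).deriv_eq, deriv_const_add',
    deriv_const_mul_field', hderiv z hz]
  ring

theorem extremal_function_property_general (β α : ℝ) (hβ : 0 ≤ β ∧ β < 1)
    (x : ℂ) (hx : ‖x‖ = 1) :
    DifferentiableOn ℂ
      (fun z : ℂ => z + 4 * ((1 : ℂ) - β) *
        ∑' n : ℕ, x ^ (n + 1) * z ^ (n + 2) /
          (((n : ℂ) + 2) * (((n : ℂ) + 2) + 1 + (((n : ℂ) + 2) - 1) * Complex.exp (α * Complex.I))))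
      (Metric.ball (0 : ℂ) 1) ∧
    ∀ z ∈ Metric.ball (0 : ℂ) 1,
      (deriv (fun z : ℂ => z + 4 * ((1 : ℂ) - β) *
          ∑' n : ℕ, x ^ (n + 1) * z ^ (n + 2) /
            (((n : ℂ) + 2) * (((n : ℂ) + 2) + 1 + (((n : ℂ) + 2) - 1) * Complex.exp (α * Complex.I)))) z
        + ((1 + Complex.exp (α * Complex.I)) / 2) * z *
          deriv (deriv (fun z : ℂ => z + 4 * ((1 : ℂ) - β) *
            ∑' n : ℕ, x ^ (n + 1) * z ^ (n + 2) /
              (((n : ℂ) + 2) * (((n : ℂ) + 2) + 1 + (((n : ℂ) + 2) - 1) * Complex.exp (α * Complex.I))))) z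
        = (1 + (1 - 2 * (β : ℂ)) * (x * z)) / (1 - x * z)) ∧
      β < ((1 + (1 - 2 * (β : ℂ)) * (x * z)) / (1 - x * z)).re := by
  set e := Complex.exp (α * Complex.I)
  have he : ‖e‖ = 1 := norm_exp_ofReal_mul_I α
  set g := fun w ↦ ∑' n, extremalCoeff x e n * w ^ (n + 2) with hg_def
  have hf : (fun z : ℂ => z + 4 * ((1 : ℂ) - β) * ∑' n : ℕ, x ^ (n + 1) * z ^ (n + 2) /
      (((n : ℂ) + 2) * (((n : ℂ) + 2) + 1 + (((n : ℂ) + 2) - 1) * e))) =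
      fun z ↦ z + 4 * (1 - β) * g z := by
    simp only [hg_def, extremalCoeff, extremalDenom, mul_div_right_comm]
  have hg := differentiableOn_tsum_mul_pow_add_two (norm_extremalCoeff_le_one hx he)
  rw [hf]
  refine ⟨differentiableOn_id.add (hg.const_mul _), fun z hz ↦ ?_⟩
  have hxz : ‖x * z‖ < 1 := by rwa [norm_mul, hx, one_mul, ← mem_ball_zero_iff]
  have hne : 1 - x * z ≠ 0 := sub_ne_zero.2 fun h ↦ by rw [← h, norm_one] at hxz; exact hxz.false
  refine ⟨?_, lt_re_one_add_mul_div_one_sub hβ.2 hxz⟩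
  rw [deriv_add_mul_deriv_deriv_id_add_const_mul isOpen_ball hg _ _ hz,
    deriv_add_mul_deriv_deriv_extremal hx he hz]
  field_simp
  ring

theorem extremal_function_property (β α : ℝ) (hβ : 0 ≤ β ∧ β < 1) (hα : -π < α ∧ α ≤ π)
    (x : ℂ) (hx : ‖x‖ = 1) :
    DifferentiableOn ℂ
      (fun z : ℂ => z + 4 * ((1 : ℂ) - β) *
        ∑' n : ℕ, x ^ (n + 1) * z ^ (n + 2) /
          (((n : ℂ) + 2) * (((n : ℂ) + 2) + 1 + (((n : ℂ) + 2) - 1) * Complex.exp (α * Complex.I))))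
      (Metric.ball (0 : ℂ) 1) ∧
    ∀ z ∈ Metric.ball (0 : ℂ) 1,
      (deriv (fun z : ℂ => z + 4 * ((1 : ℂ) - β) *
          ∑' n : ℕ, x ^ (n + 1) * z ^ (n + 2) /
            (((n : ℂ) + 2) * (((n : ℂ) + 2) + 1 + (((n : ℂ) + 2) - 1) * Complex.exp (α * Complex.I)))) z
        + ((1 + Complex.exp (α * Complex.I)) / 2) * z *
          deriv (deriv (fun z : ℂ => z + 4 * ((1 : ℂ) - β) *
            ∑' n : ℕ, x ^ (n + 1) * z ^ (n + 2) /
              (((n : ℂ) + 2) * (((n : ℂ) + 2) + 1 + (((n : ℂ) + 2) - 1) * Complex.exp (α * Complex.I))))) z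
        = (1 + (1 - 2 * (β : ℂ)) * (x * z)) / (1 - x * z)) ∧
      β < ((1 + (1 - 2 * (β : ℂ)) * (x * z)) / (1 - x * z)).re :=
  extremal_function_property_general β α hβ x hx
end

section
/- Let 0 ≤ β < 1 and α ∈ (−π, π]. The second partial sum s₂(z) = z + (2(1−β)/(3+e^{iα})) z² of the extremal function f₁ (the function f_x with x = 1) satisfies s₂'(z₀) = 0 at z₀ = −(3+e^{iα})/(4(1−β)); in particular Re(s₂'(z₀)) = 0, showing the radius √(10+6cos α)/(4(1−β)) of univalence cannot be improved for the criterion Re(s₂') > 0. -/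
open Complex Real

/-! The critical point of `z + c z²` is `-1/(2c)`, and with `c = 2(1-β)/(3+e^{iα})` this is
exactly `z₀`; its modulus is `|3+e^{iα}|/(4(1-β))`, where `|3+e^{iα}|² = 10 + 6 cos α`. -/

theorem deriv_add_mul_sq {𝕜 : Type*} [NontriviallyNormedField 𝕜] (c z : 𝕜) :
    deriv (fun z : 𝕜 => z + c * z ^ 2) z = 1 + 2 * c * z := by
  rw [((hasDerivAt_id' z).fun_add ((hasDerivAt_pow 2 z).const_mul c)).deriv]
  ring

theorem deriv_add_mul_sq_neg_inv {𝕜 : Type*} [NontriviallyNormedField 𝕜] {c : 𝕜} (hc : 2 * c ≠ 0) :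
    deriv (fun z : 𝕜 => z + c * z ^ 2) (-(2 * c)⁻¹) = 0 := by
  rw [deriv_add_mul_sq, mul_neg, mul_inv_cancel₀ hc, add_neg_cancel]

theorem Complex.norm_ofReal_add_exp_mul_I (a α : ℝ) :
    ‖(a : ℂ) + exp (α * I)‖ = √(a ^ 2 + 1 + 2 * a * Real.cos α) := by
  rw [norm_def, normSq_apply]
  congr 1
  simp only [add_re, add_im, ofReal_re, ofReal_im, exp_ofReal_mul_I_re, exp_ofReal_mul_I_im]
  linear_combination Real.sin_sq_add_cos_sq α

theorem Complex.norm_three_add_exp_mul_I (α : ℝ) :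
    ‖3 + exp (α * I)‖ = √(10 + 6 * Real.cos α) := by
  have h := norm_ofReal_add_exp_mul_I 3 α
  push_cast at h
  rw [h]
  ring_nf

theorem Complex.three_add_exp_mul_I_ne_zero (α : ℝ) : 3 + exp (α * I) ≠ 0 := by
  intro h
  have := congrArg norm h
  rw [norm_three_add_exp_mul_I, norm_zero, Real.sqrt_eq_zero (by nlinarith [neg_one_le_cos α])]
    at this
  nlinarith [neg_one_le_cos α]

theorem sharpness_second_section_general (β α : ℝ) (hβ : 0 ≤ β ∧ β < 1) :
    deriv (fun z : ℂ => z + (2 * ((1 : ℂ) - β) / (3 + Complex.exp (α * Complex.I))) * z ^ 2)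
        (-(3 + Complex.exp (α * Complex.I)) / (4 * ((1 : ℂ) - β))) = 0 ∧
    (deriv (fun z : ℂ => z + (2 * ((1 : ℂ) - β) / (3 + Complex.exp (α * Complex.I))) * z ^ 2)
        (-(3 + Complex.exp (α * Complex.I)) / (4 * ((1 : ℂ) - β)))).re = 0 ∧
    ‖(-(3 + Complex.exp (α * Complex.I)) / (4 * ((1 : ℂ) - β)))‖ =
      Real.sqrt (10 + 6 * Real.cos α) / (4 * (1 - β)) := by
  have he := three_add_exp_mul_I_ne_zero α
  have hβ' : (1 : ℂ) - β ≠ 0 := by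
    rw [← ofReal_one, ← ofReal_sub, ofReal_ne_zero]
    linarith [hβ.2]
  have hz₀ : -(3 + exp (α * I)) / (4 * ((1 : ℂ) - β)) =
      -(2 * (2 * ((1 : ℂ) - β) / (3 + exp (α * I))))⁻¹ := by
    field_simp
    ring
  have hcrit : deriv (fun z : ℂ => z + (2 * ((1 : ℂ) - β) / (3 + exp (α * I))) * z ^ 2)
      (-(3 + exp (α * I)) / (4 * ((1 : ℂ) - β))) = 0 := by
    rw [hz₀]
    exact deriv_add_mul_sq_neg_inv (mul_ne_zero two_ne_zero (div_ne_zero (mul_ne_zero two_ne_zero hβ') he))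
  refine ⟨hcrit, by rw [hcrit, zero_re], ?_⟩
  have h4 : ‖4 * ((1 : ℂ) - β)‖ = 4 * (1 - β) := by
    rw [← ofReal_one, ← ofReal_sub, norm_mul, norm_real, Real.norm_of_nonneg (by linarith [hβ.2])]
    norm_num
  rw [norm_div, norm_neg, norm_three_add_exp_mul_I, h4]

theorem sharpness_second_section (β α : ℝ) (hβ : 0 ≤ β ∧ β < 1) (hα : -π < α ∧ α ≤ π) :
    deriv (fun z : ℂ => z + (2 * ((1 : ℂ) - β) / (3 + Complex.exp (α * Complex.I))) * z ^ 2)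
        (-(3 + Complex.exp (α * Complex.I)) / (4 * ((1 : ℂ) - β))) = 0 ∧
    (deriv (fun z : ℂ => z + (2 * ((1 : ℂ) - β) / (3 + Complex.exp (α * Complex.I))) * z ^ 2)
        (-(3 + Complex.exp (α * Complex.I)) / (4 * ((1 : ℂ) - β)))).re = 0 ∧
    ‖(-(3 + Complex.exp (α * Complex.I)) / (4 * ((1 : ℂ) - β)))‖ =
      Real.sqrt (10 + 6 * Real.cos α) / (4 * (1 - β)) :=
  sharpness_second_section_general β α hβ
end
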